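/- arXiv:2111.01602 — 5 statements merged into one kernel-verified Lean document; each statement's English description precedes it below -/
import Mathlib

section
/- Let T ≥ 1, λ > 0, Y > 0, X > 0, and let x₁,…,x_T ∈ ℝ^d with ‖x_t‖₂ ≤ X and y₁,…,y_T ∈ [−Y, Y]. Assume the unregularized design matrix G_T(0) = Σ_{t=1}^T x_t x_tᵀ is invertible, and let λ_min(G_T(0)) denote its smallest eigenvalue. Define the online ridge predictions via θ_t^r := G_t(λ)^{-1} Σ_{s=1}^t x_s y_s (with θ_0^r = 0), set Y^r := max{Y, max_{1≤t≤T} |⟨x_t, θ_{t-1}^r⟩|}, and the regret R_T := Σ_{t=1}^T (⟨x_t, θ_{t-1}^r⟩ − y_t)² − inf_{θ ∈ ℝ^d} Σ_{t=1}^T (⟨x_t, θ⟩ − y_t)². Then R_T ≤ 4 (Y^r)² d log(1 + T X² /(λ d)) + λ (Y^r)² T / λ_min(G_T(0)). -/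
open Matrix Finset

set_option linter.unusedSectionVars false
set_option linter.unusedVariables false
set_option maxHeartbeats 1000000

namespace RidgeAux
variable {n : Type*} [Fintype n] [DecidableEq n]

lemma dot_vecMulVec (u : n → ℝ) (z : n → ℝ) :
    z ⬝ᵥ (vecMulVec u u *ᵥ z) = (u ⬝ᵥ z) ^ 2 := by
  simp only [vecMulVec, mulVec, dotProduct, of_apply]
  rw [sq]
  rw [Finset.sum_mul_sum]
  congr 1; ext i; rw [Finset.mul_sum]; congr 1; ext j; ring

lemma posSemidef_vecMulVec (u : n → ℝ) : (vecMulVec u u).PosSemidef := by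
  refine Matrix.PosSemidef.of_dotProduct_mulVec_nonneg ?_ ?_
  · ext i j
    simp [vecMulVec, conjTranspose, mul_comm]
  · intro z
    simp only [star_trivial]
    rw [dot_vecMulVec]
    positivity

lemma dot_self_pos {z : n → ℝ} (hz : z ≠ 0) : 0 < z ⬝ᵥ z := by
  rcases Function.ne_iff.mp hz with ⟨i, hi⟩
  have h1 : (0:ℝ) < z i * z i := mul_self_pos.mpr hi
  calc (0:ℝ) < z i * z i := h1
    _ ≤ z ⬝ᵥ z := Finset.single_le_sum (f := fun j => z j * z j)
        (fun j _ => mul_self_nonneg _) (Finset.mem_univ i)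

lemma dot_dot_nonneg (v : n → ℝ) : 0 ≤ v ⬝ᵥ v :=
  Finset.sum_nonneg fun i _ => mul_self_nonneg _

lemma posDef_smul_one {c : ℝ} (hc : 0 < c) : (c • (1 : Matrix n n ℝ)).PosDef := by
  refine Matrix.PosDef.of_dotProduct_mulVec_pos ?_ ?_
  · unfold Matrix.IsHermitian
    rw [conjTranspose_smul, conjTranspose_one]
    simp
  · intro z hz
    simp only [star_trivial, smul_mulVec, one_mulVec, dotProduct_smul, smul_eq_mul]
    exact mul_pos hc (dot_self_pos hz)

lemma symm_dot {A : Matrix n n ℝ} (hA : A.IsHermitian) (z u : n → ℝ) :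
    z ⬝ᵥ (A *ᵥ u) = (A *ᵥ z) ⬝ᵥ u := by
  rw [dotProduct_mulVec]
  congr 1
  have ht : Aᵀ = A := by
    rw [← conjTranspose_eq_transpose_of_trivial]; exact hA
  conv_lhs => rw [← ht]
  rw [vecMul_transpose]

lemma sum_mulVec' {ι : Type*} (S : Finset ι) (M : ι → Matrix n n ℝ) (v : n → ℝ) :
    (∑ s ∈ S, M s) *ᵥ v = ∑ s ∈ S, (M s *ᵥ v) := by
  ext i
  simp only [mulVec, dotProduct, Finset.sum_apply, Matrix.sum_apply, Finset.sum_mul]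
  rw [Finset.sum_comm]

lemma cs_posdef {A : Matrix n n ℝ} (hA : A.PosDef) (xx u : n → ℝ) :
    (xx ⬝ᵥ u) ^ 2 ≤ (xx ⬝ᵥ (A⁻¹ *ᵥ xx)) * (u ⬝ᵥ (A *ᵥ u)) := by
  have hAinv : A⁻¹.PosDef := hA.inv
  by_cases hx0 : xx = 0
  · simp [hx0]
  · have hw : 0 < xx ⬝ᵥ (A⁻¹ *ᵥ xx) := by
      have := hAinv.dotProduct_mulVec_pos hx0
      simpa using this
    have hdet : IsUnit A.det := isUnit_iff_ne_zero.mpr hA.det_pos.ne'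
    have hAAinv : ∀ v : n → ℝ, A *ᵥ (A⁻¹ *ᵥ v) = v := fun v => by
      rw [mulVec_mulVec, Matrix.mul_nonsing_inv _ hdet, one_mulVec]
    set w := xx ⬝ᵥ (A⁻¹ *ᵥ xx) with hwdef
    set a := xx ⬝ᵥ u with hadef
    set q := u ⬝ᵥ (A *ᵥ u) with hqdef
    have h0 := hA.posSemidef.dotProduct_mulVec_nonneg (u - (a/w) • (A⁻¹ *ᵥ xx))
    simp only [star_trivial] at h0
    have hexp : (u - (a/w) • (A⁻¹ *ᵥ xx)) ⬝ᵥ (A *ᵥ (u - (a/w) • (A⁻¹ *ᵥ xx)))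
        = q - 2*(a/w)*a + (a/w)^2 * w := by
      rw [mulVec_sub, mulVec_smul, hAAinv]
      simp only [sub_dotProduct, dotProduct_sub, smul_dotProduct, dotProduct_smul,
        smul_eq_mul]
      have h1 : (A⁻¹ *ᵥ xx) ⬝ᵥ (A *ᵥ u) = a := by
        rw [symm_dot hA.isHermitian, hAAinv, hadef]
      have h2 : u ⬝ᵥ xx = a := dotProduct_comm _ _
      have h3 : (A⁻¹ *ᵥ xx) ⬝ᵥ xx = w := dotProduct_comm _ _
      rw [h1, h2, h3]
      ring
    rw [hexp] at h0
    have hid : q - 2*(a/w)*a + (a/w)^2 * w = q - a^2/w := by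
      field_simp
      ring
    rw [hid] at h0
    have hq : a^2 / w ≤ q := by linarith
    have := (div_le_iff₀ hw).mp hq
    calc a^2 ≤ q * w := this
      _ = w * q := mul_comm _ _

lemma quad_eq_sum_eigen {A : Matrix n n ℝ} (hA : A.IsHermitian) (v : n → ℝ) :
    v ⬝ᵥ (A *ᵥ v) = ∑ i, hA.eigenvalues i * ((star hA.eigenvectorUnitary.1 *ᵥ v) i)^2 := by
  set U : Matrix n n ℝ := hA.eigenvectorUnitary.1 with hU
  set wv : n → ℝ := star U *ᵥ v with hwv
  have hspec := hA.spectral_theorem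
  conv_lhs => rw [hspec, Unitary.conjStarAlgAut_apply]
  rw [← mulVec_mulVec, ← mulVec_mulVec]
  rw [dotProduct_mulVec]
  have h1 : v ᵥ* U = wv := by
    rw [hwv]
    have h2 : star U = Uᴴ := rfl
    rw [h2, conjTranspose_eq_transpose_of_trivial, mulVec_transpose]
  rw [h1]
  simp only [dotProduct, mulVec_diagonal, Function.comp_apply, RCLike.ofReal_real_eq_id, id_eq]
  congr 1
  ext i
  ring

lemma norm_eigen_eq {A : Matrix n n ℝ} (hA : A.IsHermitian) (v : n → ℝ) :
    (star hA.eigenvectorUnitary.1 *ᵥ v) ⬝ᵥ (star hA.eigenvectorUnitary.1 *ᵥ v) = v ⬝ᵥ v := by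
  set U : Matrix n n ℝ := hA.eigenvectorUnitary.1 with hU
  rw [dotProduct_mulVec, Matrix.vecMul_mulVec]
  have h3 : (star U)ᵀ = U := by
    have h2 : star U = Uᴴ := rfl
    rw [h2, conjTranspose_eq_transpose_of_trivial, transpose_transpose]
  rw [h3]
  have h4 : U * star U = 1 := Matrix.mem_unitaryGroup_iff.mp hA.eigenvectorUnitary.2
  rw [h4, vecMul_one]

lemma rayleigh_lower [Nonempty n] {A : Matrix n n ℝ} (hA : A.IsHermitian) (v : n → ℝ) :
    (⨅ i, hA.eigenvalues i) * (v ⬝ᵥ v) ≤ v ⬝ᵥ (A *ᵥ v) := by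
  rw [quad_eq_sum_eigen hA v, ← norm_eigen_eq hA v]
  set wv : n → ℝ := star hA.eigenvectorUnitary.1 *ᵥ v with hwv
  have hbdd : BddBelow (Set.range hA.eigenvalues) := Set.Finite.bddBelow (Set.finite_range _)
  have : (⨅ i, hA.eigenvalues i) * (wv ⬝ᵥ wv) = ∑ i, (⨅ j, hA.eigenvalues j) * (wv i)^2 := by
    rw [dotProduct, Finset.mul_sum]
    congr 1; ext i; ring
  rw [this]
  apply Finset.sum_le_sum
  intro i _
  have h5 : (⨅ j, hA.eigenvalues j) ≤ hA.eigenvalues i := ciInf_le hbdd i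
  nlinarith [sq_nonneg (wv i)]

lemma trace_eq_sum_eigen {A : Matrix n n ℝ} (hA : A.IsHermitian) :
    A.trace = ∑ i, hA.eigenvalues i := by
  conv_lhs => rw [hA.spectral_theorem, Unitary.conjStarAlgAut_apply]
  rw [Matrix.trace_mul_cycle]
  have h1 : star hA.eigenvectorUnitary.1 * hA.eigenvectorUnitary.1 = 1 :=
    ((Unitary.mem_iff).mp hA.eigenvectorUnitary.2).1
  rw [h1, Matrix.one_mul, trace_diagonal]
  simp

lemma det_add_vecMulVec {A : Matrix n n ℝ} (hA : IsUnit A.det) (u : n → ℝ) :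
    (A + vecMulVec u u).det = A.det * (1 + u ⬝ᵥ (A⁻¹ *ᵥ u)) := by
  rw [vecMulVec_eq Unit, Matrix.det_add_replicateCol_mul_replicateRow hA]
  congr 1
  rw [det_unique]
  simp only [Matrix.add_apply, Matrix.one_apply_eq, Matrix.mul_apply, dotProduct, mulVec,
    Matrix.replicateRow_apply, Matrix.replicateCol_apply]
  congr 1
  simp_rw [Finset.sum_mul, Finset.mul_sum]
  rw [Finset.sum_comm]
  congr 1; ext i
  congr 1; ext j
  ring

lemma div_le_log (w : ℝ) (hw : 0 ≤ w) : w / (1 + w) ≤ Real.log (1 + w) := by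
  have h1 : (0:ℝ) < 1 + w := by linarith
  have h2 := Real.log_le_sub_one_of_pos (show (0:ℝ) < (1+w)⁻¹ by positivity)
  rw [Real.log_inv] at h2
  have h3 : (1+w)⁻¹ - 1 = -(w/(1+w)) := by field_simp; ring
  rw [h3] at h2
  linarith

lemma step_scalar {w q a c : ℝ} (hw : 0 ≤ w) (hq : 0 ≤ q) (hcs : a^2 ≤ w*q) :
    c^2/(1+w) ≤ q + (a+c)^2 := by
  have h1 : (0:ℝ) < 1+w := by linarith
  rw [div_le_iff₀ h1]
  rcases eq_or_lt_of_le hw with h|h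
  · have ha : a = 0 := by nlinarith [sq_nonneg a]
    rw [← h, ha]
    nlinarith
  · nlinarith [sq_nonneg ((1+w)*a + w*c), mul_pos h h1]

lemma posDef_of_posSemidef_isUnit {A : Matrix n n ℝ} (h1 : A.PosSemidef) (h2 : IsUnit A) :
    A.PosDef := by
  refine Matrix.PosDef.of_dotProduct_mulVec_pos h1.isHermitian (fun z hz => ?_)
  rcases lt_or_eq_of_le (h1.dotProduct_mulVec_nonneg z) with h|h
  · exact h
  · exfalso
    have h3 : A *ᵥ z = 0 := (h1.dotProduct_mulVec_zero_iff z).mp h.symm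
    have h4 : IsUnit A.det := (Matrix.isUnit_iff_isUnit_det A).mp h2
    have h5 : A⁻¹ *ᵥ (A *ᵥ z) = z := by
      rw [mulVec_mulVec, Matrix.nonsing_inv_mul _ h4, one_mulVec]
    rw [h3, mulVec_zero] at h5
    exact hz h5.symm

lemma quad_diff {A : Matrix n n ℝ} (hA : A.IsHermitian) {θm bb : n → ℝ}
    (hb : A *ᵥ θm = bb) (v : n → ℝ) :
    (v ⬝ᵥ (A *ᵥ v) - 2*(bb ⬝ᵥ v)) - (θm ⬝ᵥ (A *ᵥ θm) - 2*(bb ⬝ᵥ θm))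
      = (v - θm) ⬝ᵥ (A *ᵥ (v - θm)) := by
  rw [mulVec_sub]
  simp only [sub_dotProduct, dotProduct_sub]
  have h1 : v ⬝ᵥ (A *ᵥ θm) = bb ⬝ᵥ v := by
    rw [hb]; exact dotProduct_comm _ _
  have h2 : θm ⬝ᵥ (A *ᵥ v) = bb ⬝ᵥ v := by
    rw [symm_dot hA, hb]
  have h3 : θm ⬝ᵥ (A *ᵥ θm) = bb ⬝ᵥ θm := by
    rw [hb]; exact dotProduct_comm _ _
  rw [h1, h2, h3]
  ring

lemma dotProduct_sum' {ι : Type*} (v : n → ℝ) (S : Finset ι) (f : ι → n → ℝ) :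
    v ⬝ᵥ (∑ s ∈ S, f s) = ∑ s ∈ S, v ⬝ᵥ f s := by
  simp only [dotProduct, Finset.sum_apply, Finset.mul_sum]
  rw [Finset.sum_comm]

lemma sum_dotProduct' {ι : Type*} (v : n → ℝ) (S : Finset ι) (f : ι → n → ℝ) :
    (∑ s ∈ S, f s) ⬝ᵥ v = ∑ s ∈ S, f s ⬝ᵥ v := by
  simp only [dotProduct, Finset.sum_apply, Finset.sum_mul]
  rw [Finset.sum_comm]

lemma sq_loss_expand (S : Finset ℕ) (x : ℕ → n → ℝ) (y : ℕ → ℝ) (v : n → ℝ) :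
    ∑ s ∈ S, (x s ⬝ᵥ v - y s)^2 = v ⬝ᵥ ((∑ s ∈ S, vecMulVec (x s) (x s)) *ᵥ v)
      - 2 * ((∑ s ∈ S, y s • x s) ⬝ᵥ v) + ∑ s ∈ S, (y s)^2 := by
  rw [sum_mulVec', dotProduct_sum', sum_dotProduct', Finset.mul_sum,
    ← Finset.sum_sub_distrib, ← Finset.sum_add_distrib]
  congr 1; ext s
  rw [dot_vecMulVec, smul_dotProduct, smul_eq_mul]
  ring

lemma sub_div_id (c2 w : ℝ) (h : 0 < 1 + w) : c2 - c2/(1+w) = c2 * (w/(1+w)) := by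
  field_simp
  ring

end RidgeAux

open RidgeAux in
theorem stmt_0 {d : ℕ} (hd : 0 < d) (T : ℕ) (hT : 1 ≤ T)
    (lam Y X : ℝ) (hlam : 0 < lam) (hY : 0 < Y) (hX : 0 < X)
    (x : ℕ → Fin d → ℝ) (y : ℕ → ℝ)
    (hx : ∀ t ∈ Finset.Icc 1 T, Real.sqrt (x t ⬝ᵥ x t) ≤ X)
    (hy : ∀ t ∈ Finset.Icc 1 T, |y t| ≤ Y)
    (G : ℕ → Matrix (Fin d) (Fin d) ℝ)
    (hG : ∀ t, G t = lam • (1 : Matrix (Fin d) (Fin d) ℝ)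
      + ∑ s ∈ Finset.Icc 1 t, vecMulVec (x s) (x s))
    (G0 : Matrix (Fin d) (Fin d) ℝ)
    (hG0 : G0 = ∑ s ∈ Finset.Icc 1 T, vecMulVec (x s) (x s))
    (hG0unit : IsUnit G0)
    (hG0herm : G0.IsHermitian)
    (lammin : ℝ) (hlammin : lammin = ⨅ i, hG0herm.eigenvalues i)
    (θ : ℕ → Fin d → ℝ) (hθ0 : θ 0 = 0)
    (hθ : ∀ t ∈ Finset.Icc 1 T, θ t = (G t)⁻¹ *ᵥ (∑ s ∈ Finset.Icc 1 t, y s • x s))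
    (Yr : ℝ)
    (hYr : Yr = max Y ((Finset.Icc 1 T).sup' (Finset.nonempty_Icc.mpr hT)
      (fun t => |x t ⬝ᵥ θ (t - 1)|)))
    (R : ℝ)
    (hR : R = ∑ t ∈ Finset.Icc 1 T, (x t ⬝ᵥ θ (t - 1) - y t) ^ 2
      - ⨅ θ' : Fin d → ℝ, ∑ t ∈ Finset.Icc 1 T, (x t ⬝ᵥ θ' - y t) ^ 2) :
    R ≤ 4 * Yr ^ 2 * d * Real.log (1 + T * X ^ 2 / (lam * d))
      + lam * Yr ^ 2 * T / lammin := by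
  classical
  haveI : Nonempty (Fin d) := Fin.pos_iff_nonempty.mp hd
  have hdpos : (0:ℝ) < d := Nat.cast_pos.mpr hd
  have hsumPSD : ∀ S : Finset ℕ, (∑ s ∈ S, vecMulVec (x s) (x s)).PosSemidef := fun S =>
    Finset.sum_induction _ _ (fun a b ha hb => ha.add hb) Matrix.PosSemidef.zero
      (fun s _ => posSemidef_vecMulVec _)
  have hGpd : ∀ t, (G t).PosDef := fun t => by
    rw [hG t]; exact (posDef_smul_one hlam).add_posSemidef (hsumPSD _)
  have hGdet : ∀ t, IsUnit (G t).det := fun t => isUnit_iff_ne_zero.mpr (hGpd t).det_pos.ne'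
  have hGinv : ∀ t (v : Fin d → ℝ), G t *ᵥ ((G t)⁻¹ *ᵥ v) = v := fun t v => by
    rw [mulVec_mulVec, Matrix.mul_nonsing_inv _ (hGdet t), one_mulVec]
  set b : ℕ → Fin d → ℝ := fun t => ∑ s ∈ Finset.Icc 1 t, y s • x s with hbdef
  have hGθ : ∀ t, t ≤ T → G t *ᵥ θ t = b t := by
    intro t ht
    rcases Nat.eq_zero_or_pos t with rfl|h1
    · rw [hθ0, mulVec_zero, hbdef]; simp
    · rw [hθ t (Finset.mem_Icc.mpr ⟨h1, ht⟩), hGinv]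
  set L : ℕ → (Fin d → ℝ) → ℝ :=
    fun t v => (∑ s ∈ Finset.Icc 1 t, (x s ⬝ᵥ v - y s)^2) + lam * (v ⬝ᵥ v) with hLdef
  have hLquad : ∀ t v, L t v
      = v ⬝ᵥ (G t *ᵥ v) - 2 * (b t ⬝ᵥ v) + ∑ s ∈ Finset.Icc 1 t, (y s)^2 := by
    intro t v
    rw [hLdef]
    simp only
    rw [sq_loss_expand (Finset.Icc 1 t) x y v, hG t, add_mulVec, dotProduct_add,
      smul_mulVec, one_mulVec, dotProduct_smul, smul_eq_mul]
    ring
  have hquad : ∀ t, t ≤ T → ∀ v, L t v = L t (θ t) + (v - θ t) ⬝ᵥ (G t *ᵥ (v - θ t)) := by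
    intro t ht v
    have hq := quad_diff (hGpd t).isHermitian (hGθ t ht) v
    rw [hLquad t v, hLquad t (θ t)] at *
    linarith [hq]
  -- step inequality
  have hstep : ∀ t, t ∈ Finset.Icc 1 T → ∀ v,
      L (t-1) (θ (t-1)) + (x t ⬝ᵥ θ (t-1) - y t)^2 / (1 + x t ⬝ᵥ ((G (t-1))⁻¹ *ᵥ x t))
        ≤ L t v := by
    intro t htmem v
    obtain ⟨ht1, htT⟩ := Finset.mem_Icc.mp htmem
    obtain ⟨m, rfl⟩ : ∃ m, t = m + 1 := ⟨t-1, (Nat.succ_pred_eq_of_pos ht1).symm⟩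
    have hmT : m ≤ T := le_trans (Nat.le_succ m) htT
    have hsplit : L (m+1) v = L m v + (x (m+1) ⬝ᵥ v - y (m+1))^2 := by
      rw [hLdef]
      simp only
      rw [Finset.sum_Icc_succ_top (Nat.le_add_left 1 m)]
      ring
    have hLm := hquad m hmT v
    have hxv : x (m+1) ⬝ᵥ v - y (m+1)
        = x (m+1) ⬝ᵥ (v - θ m) + (x (m+1) ⬝ᵥ θ m - y (m+1)) := by
      rw [dotProduct_sub]; ring
    have hcs := cs_posdef (hGpd m) (x (m+1)) (v - θ m)
    have hwnn : 0 ≤ x (m+1) ⬝ᵥ ((G m)⁻¹ *ᵥ x (m+1)) := by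
      have := (hGpd m).inv.posSemidef.dotProduct_mulVec_nonneg (x (m+1)); simpa using this
    have hqnn : 0 ≤ (v - θ m) ⬝ᵥ (G m *ᵥ (v - θ m)) := by
      have := (hGpd m).posSemidef.dotProduct_mulVec_nonneg (v - θ m); simpa using this
    have hkey := step_scalar (c := x (m+1) ⬝ᵥ θ m - y (m+1)) hwnn hqnn hcs
    simp only [Nat.add_sub_cancel]
    rw [hsplit, hLm, hxv]
    linarith [hkey]
  -- telescoping
  have hmain : ∀ m, m ≤ T →
      ∑ t ∈ Finset.Icc 1 m,
        (x t ⬝ᵥ θ (t-1) - y t)^2 / (1 + x t ⬝ᵥ ((G (t-1))⁻¹ *ᵥ x t)) ≤ L m (θ m) := by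
    intro m
    induction m with
    | zero =>
      intro _
      rw [hLdef, hθ0]
      simp
    | succ m ih =>
      intro hm
      have hm' : m ≤ T := le_trans (Nat.le_succ m) hm
      rw [Finset.sum_Icc_succ_top (Nat.le_add_left 1 m)]
      have h1 := hstep (m+1) (Finset.mem_Icc.mpr ⟨Nat.le_add_left 1 m, hm⟩) (θ (m+1))
      simp only [Nat.add_sub_cancel] at h1 ⊢
      linarith [ih hm']
  -- determinant recursion
  have hdetprod : ∀ m, (G m).det
      = lam^d * ∏ t ∈ Finset.Icc 1 m, (1 + x t ⬝ᵥ ((G (t-1))⁻¹ *ᵥ x t)) := by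
    intro m
    induction m with
    | zero =>
      rw [hG 0]
      simp [Matrix.det_smul]
    | succ m ih =>
      have hGsucc : G (m+1) = G m + vecMulVec (x (m+1)) (x (m+1)) := by
        rw [hG (m+1), hG m, Finset.sum_Icc_succ_top (Nat.le_add_left 1 m), add_assoc]
      rw [hGsucc, det_add_vecMulVec (hGdet m), ih,
        Finset.prod_Icc_succ_top (Nat.le_add_left 1 m)]
      simp only [Nat.add_sub_cancel]
      ring
  have hwnn : ∀ t, 0 ≤ x t ⬝ᵥ ((G (t-1))⁻¹ *ᵥ x t) := fun t => by
    have := (hGpd (t-1)).inv.posSemidef.dotProduct_mulVec_nonneg (x t); simpa using this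
  have h1w : ∀ t, (0:ℝ) < 1 + x t ⬝ᵥ ((G (t-1))⁻¹ *ᵥ x t) := fun t => by linarith [hwnn t]
  have hlogsum : ∑ t ∈ Finset.Icc 1 T, Real.log (1 + x t ⬝ᵥ ((G (t-1))⁻¹ *ᵥ x t))
      = Real.log ((G T).det) - d * Real.log lam := by
    rw [hdetprod T, Real.log_mul (by positivity)
        (ne_of_gt (Finset.prod_pos (fun t _ => h1w t))),
      Real.log_pow, Real.log_prod (fun t _ => (h1w t).ne')]
    ring
  -- trace bound
  have htr : (G T).trace ≤ lam * d + T * X^2 := by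
    rw [hG T, trace_add, trace_smul, trace_sum]
    have h2 : ∀ s ∈ Finset.Icc 1 T, (vecMulVec (x s) (x s)).trace ≤ X^2 := by
      intro s hs
      have h3 : (vecMulVec (x s) (x s)).trace = x s ⬝ᵥ x s := by
        simp [Matrix.trace, Matrix.diag, vecMulVec, dotProduct]
      rw [h3]
      have h5 : x s ⬝ᵥ x s = (Real.sqrt (x s ⬝ᵥ x s))^2 :=
        (Real.sq_sqrt (dot_dot_nonneg _)).symm
      rw [h5]
      exact pow_le_pow_left₀ (Real.sqrt_nonneg _) (hx s hs) 2
    have h4 : ∑ s ∈ Finset.Icc 1 T, (vecMulVec (x s) (x s)).trace ≤ T * X^2 := by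
      calc ∑ s ∈ Finset.Icc 1 T, (vecMulVec (x s) (x s)).trace
          ≤ (Finset.Icc 1 T).card • (X^2) := Finset.sum_le_card_nsmul _ _ _ h2
        _ = T * X^2 := by rw [Nat.card_Icc]; simp [nsmul_eq_mul]
    have h6 : (lam • (1 : Matrix (Fin d) (Fin d) ℝ)).trace = lam * d := by
      rw [trace_smul, trace_one]
      simp [smul_eq_mul]
    rw [trace_smul, trace_one] at *
    simp only [smul_eq_mul] at *
    push_cast
    linarith [h4]
  -- log det bound
  have hm0 : (0:ℝ) < lam + T * X^2 / d := by positivity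
  have hdetle : Real.log ((G T).det) ≤ d * Real.log (lam + T * X^2 / d) := by
    have hherm := (hGpd T).isHermitian
    have heig : ∀ i, 0 < hherm.eigenvalues i := fun i => (hGpd T).eigenvalues_pos i
    have hdet2 : (G T).det = ∏ i, hherm.eigenvalues i := by
      have h7 := hherm.det_eq_prod_eigenvalues
      simpa using h7
    rw [hdet2, Real.log_prod (fun i _ => (heig i).ne')]
    have hsum : ∑ i, hherm.eigenvalues i ≤ d * (lam + T * X^2 / d) := by
      rw [← trace_eq_sum_eigen hherm]
      have h8 : (d:ℝ) * (lam + T * X^2 / d) = lam * d + T * X^2 := by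
        field_simp
      rw [h8]
      exact htr
    have hterm : ∀ i, Real.log (hherm.eigenvalues i)
        ≤ Real.log (lam + T*X^2/d) + (hherm.eigenvalues i / (lam + T*X^2/d) - 1) := by
      intro i
      have h9 := Real.log_le_sub_one_of_pos (div_pos (heig i) hm0)
      rw [Real.log_div (heig i).ne' hm0.ne'] at h9
      linarith
    calc ∑ i, Real.log (hherm.eigenvalues i)
        ≤ ∑ i, (Real.log (lam + T*X^2/d) + (hherm.eigenvalues i / (lam + T*X^2/d) - 1)) :=
          Finset.sum_le_sum (fun i _ => hterm i)
      _ = d * Real.log (lam+T*X^2/d) + ((∑ i, hherm.eigenvalues i) / (lam+T*X^2/d) - d) := by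
          rw [Finset.sum_add_distrib, Finset.sum_sub_distrib, Finset.sum_const,
            Finset.sum_const, Finset.card_univ, Fintype.card_fin, ← Finset.sum_div]
          simp [nsmul_eq_mul]
      _ ≤ d * Real.log (lam + T*X^2/d) := by
          have h10 : (∑ i, hherm.eigenvalues i) / (lam+T*X^2/d) ≤ d :=
            (div_le_iff₀ hm0).mpr (by linarith [hsum])
          linarith
  have hlogfinal : ∑ t ∈ Finset.Icc 1 T, Real.log (1 + x t ⬝ᵥ ((G (t-1))⁻¹ *ᵥ x t))
      ≤ d * Real.log (1 + T*X^2/(lam*d)) := by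
    rw [hlogsum]
    have hqeq : Real.log (lam + T*X^2/d) - Real.log lam = Real.log (1 + T*X^2/(lam*d)) := by
      rw [← Real.log_div hm0.ne' hlam.ne']
      congr 1
      field_simp
    calc Real.log ((G T).det) - d*Real.log lam
        ≤ d*Real.log (lam + T*X^2/d) - d*Real.log lam := by linarith [hdetle]
      _ = d * (Real.log (lam+T*X^2/d) - Real.log lam) := by ring
      _ = d * Real.log (1 + T*X^2/(lam*d)) := by rw [hqeq]
  -- Yr bounds
  have hYrY : Y ≤ Yr := by rw [hYr]; exact le_max_left _ _
  have hYrpos : 0 < Yr := lt_of_lt_of_le hY hYrY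
  have hcbound : ∀ t ∈ Finset.Icc 1 T, (x t ⬝ᵥ θ (t-1) - y t)^2 ≤ 4 * Yr^2 := by
    intro t hts
    have hb1 : |x t ⬝ᵥ θ (t-1)| ≤ Yr := by
      rw [hYr]
      exact le_max_of_le_right (Finset.le_sup' (fun t => |x t ⬝ᵥ θ (t - 1)|) hts)
    have hb2 : |y t| ≤ Yr := le_trans (hy t hts) hYrY
    have hb3 : |x t ⬝ᵥ θ (t-1) - y t| ≤ 2*Yr := by
      rw [sub_eq_add_neg]
      refine (abs_add_le _ _).trans ?_
      rw [abs_neg]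
      linarith
    calc (x t ⬝ᵥ θ (t-1) - y t)^2 = |x t ⬝ᵥ θ (t-1) - y t|^2 := (sq_abs _).symm
      _ ≤ (2*Yr)^2 := by nlinarith [abs_nonneg (x t ⬝ᵥ θ (t-1) - y t)]
      _ = 4*Yr^2 := by ring
  have hterm2 : ∀ t ∈ Finset.Icc 1 T,
      (x t ⬝ᵥ θ (t-1) - y t)^2
        - (x t ⬝ᵥ θ (t-1) - y t)^2 / (1 + x t ⬝ᵥ ((G (t-1))⁻¹ *ᵥ x t))
        ≤ 4*Yr^2 * Real.log (1 + x t ⬝ᵥ ((G (t-1))⁻¹ *ᵥ x t)) := by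
    intro t hts
    have hwt := hwnn t
    have h1wt := h1w t
    have hlg := div_le_log _ hwt
    have hsq := hcbound t hts
    have hid := sub_div_id ((x t ⬝ᵥ θ (t-1) - y t)^2) _ h1wt
    rw [hid]
    calc (x t ⬝ᵥ θ (t-1) - y t)^2
          * ((x t ⬝ᵥ ((G (t-1))⁻¹ *ᵥ x t)) / (1 + x t ⬝ᵥ ((G (t-1))⁻¹ *ᵥ x t)))
        ≤ 4*Yr^2 * ((x t ⬝ᵥ ((G (t-1))⁻¹ *ᵥ x t)) / (1 + x t ⬝ᵥ ((G (t-1))⁻¹ *ᵥ x t))) := by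
          apply mul_le_mul_of_nonneg_right hsq
          positivity
      _ ≤ 4*Yr^2 * Real.log (1 + x t ⬝ᵥ ((G (t-1))⁻¹ *ᵥ x t)) := by
          apply mul_le_mul_of_nonneg_left hlg
          positivity
  have hS1 : (∑ t ∈ Finset.Icc 1 T, (x t ⬝ᵥ θ (t-1) - y t)^2) - L T (θ T)
      ≤ 4 * Yr^2 * (d:ℝ) * Real.log (1 + T*X^2/(lam*d)) := by
    have h1 := hmain T le_rfl
    calc (∑ t ∈ Finset.Icc 1 T, (x t ⬝ᵥ θ (t-1) - y t)^2) - L T (θ T)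
        ≤ (∑ t ∈ Finset.Icc 1 T, (x t ⬝ᵥ θ (t-1) - y t)^2)
          - ∑ t ∈ Finset.Icc 1 T,
            (x t ⬝ᵥ θ (t-1) - y t)^2 / (1 + x t ⬝ᵥ ((G (t-1))⁻¹ *ᵥ x t)) := by linarith
      _ = ∑ t ∈ Finset.Icc 1 T, ((x t ⬝ᵥ θ (t-1) - y t)^2
            - (x t ⬝ᵥ θ (t-1) - y t)^2 / (1 + x t ⬝ᵥ ((G (t-1))⁻¹ *ᵥ x t))) := by
          rw [Finset.sum_sub_distrib]
      _ ≤ ∑ t ∈ Finset.Icc 1 T,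
            4*Yr^2 * Real.log (1 + x t ⬝ᵥ ((G (t-1))⁻¹ *ᵥ x t)) :=
          Finset.sum_le_sum hterm2
      _ = 4*Yr^2 * ∑ t ∈ Finset.Icc 1 T,
            Real.log (1 + x t ⬝ᵥ ((G (t-1))⁻¹ *ᵥ x t)) := by rw [Finset.mul_sum]
      _ ≤ 4*Yr^2 * (d * Real.log (1 + T*X^2/(lam*d))) := by
          apply mul_le_mul_of_nonneg_left hlogfinal
          positivity
      _ = 4 * Yr^2 * (d:ℝ) * Real.log (1 + T*X^2/(lam*d)) := by ring
  -- the comparator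
  have hG0pd : G0.PosDef := by
    refine posDef_of_posSemidef_isUnit ?_ hG0unit
    rw [hG0]
    exact hsumPSD _
  have hG0detU : IsUnit G0.det := (Matrix.isUnit_iff_isUnit_det G0).mp hG0unit
  set θs : Fin d → ℝ := G0⁻¹ *ᵥ b T with hθsdef
  have hG0θs : G0 *ᵥ θs = b T := by
    rw [hθsdef, mulVec_mulVec, Matrix.mul_nonsing_inv _ hG0detU, one_mulVec]
  have hfexp : ∀ v : Fin d → ℝ, ∑ t ∈ Finset.Icc 1 T, (x t ⬝ᵥ v - y t)^2
      = v ⬝ᵥ (G0 *ᵥ v) - 2*(b T ⬝ᵥ v) + ∑ s ∈ Finset.Icc 1 T, (y s)^2 := by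
    intro v
    rw [sq_loss_expand, ← hG0]
  have hinf : ∑ t ∈ Finset.Icc 1 T, (x t ⬝ᵥ θs - y t)^2
      ≤ ⨅ θ' : Fin d → ℝ, ∑ t ∈ Finset.Icc 1 T, (x t ⬝ᵥ θ' - y t)^2 := by
    apply le_ciInf
    intro v
    have hqd := quad_diff hG0pd.isHermitian hG0θs v
    have hnn : 0 ≤ (v - θs) ⬝ᵥ (G0 *ᵥ (v - θs)) := by
      simpa using hG0pd.posSemidef.dotProduct_mulVec_nonneg (v - θs)
    rw [hfexp v, hfexp θs]
    linarith [hqd]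
  have hLTθs : L T (θ T) ≤ L T θs := by
    have hq2 := hquad T le_rfl θs
    have hnn : 0 ≤ (θs - θ T) ⬝ᵥ (G T *ᵥ (θs - θ T)) := by
      simpa using (hGpd T).posSemidef.dotProduct_mulVec_nonneg (θs - θ T)
    linarith
  have hLTθs2 : L T θs = (∑ t ∈ Finset.Icc 1 T, (x t ⬝ᵥ θs - y t)^2) + lam * (θs ⬝ᵥ θs) := by
    rw [hLdef]
  -- lambda_min part
  have hlamminpos : 0 < lammin := by
    rw [hlammin]
    have heig : ∀ i, 0 < hG0herm.eigenvalues i := fun i => hG0pd.eigenvalues_pos i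
    obtain ⟨i0, hi0⟩ := Finite.exists_min hG0herm.eigenvalues
    exact lt_of_lt_of_le (heig i0) (le_ciInf hi0)
  have hray : lammin * (θs ⬝ᵥ θs) ≤ θs ⬝ᵥ (G0 *ᵥ θs) := by
    rw [hlammin]
    exact rayleigh_lower hG0herm θs
  have hSsum : θs ⬝ᵥ (G0 *ᵥ θs) = ∑ s ∈ Finset.Icc 1 T, (x s ⬝ᵥ θs)^2 := by
    rw [hG0, sum_mulVec', dotProduct_sum']
    congr 1
    ext s
    rw [dot_vecMulVec]
  have hSy : θs ⬝ᵥ (G0 *ᵥ θs) = ∑ s ∈ Finset.Icc 1 T, y s * (x s ⬝ᵥ θs) := by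
    rw [hG0θs, hbdef]
    simp only
    rw [dotProduct_sum']
    congr 1
    ext s
    rw [dotProduct_smul, smul_eq_mul, dotProduct_comm]
  have hSnn : 0 ≤ ∑ s ∈ Finset.Icc 1 T, (x s ⬝ᵥ θs)^2 :=
    Finset.sum_nonneg fun s _ => sq_nonneg _
  have hy2 : ∑ s ∈ Finset.Icc 1 T, (y s)^2 ≤ T * Y^2 := by
    have h11 : ∀ s ∈ Finset.Icc 1 T, (y s)^2 ≤ Y^2 := by
      intro s hs
      calc (y s)^2 = |y s|^2 := (sq_abs _).symm
        _ ≤ Y^2 := pow_le_pow_left₀ (abs_nonneg _) (hy s hs) 2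
    calc ∑ s ∈ Finset.Icc 1 T, (y s)^2 ≤ (Finset.Icc 1 T).card • (Y^2) :=
        Finset.sum_le_card_nsmul _ _ _ h11
      _ = T * Y^2 := by rw [Nat.card_Icc]; simp [nsmul_eq_mul]
  have hycs := Finset.sum_mul_sq_le_sq_mul_sq (Finset.Icc 1 T) y (fun s => x s ⬝ᵥ θs)
  have hSle : ∑ s ∈ Finset.Icc 1 T, (x s ⬝ᵥ θs)^2 ≤ ∑ s ∈ Finset.Icc 1 T, (y s)^2 := by
    have h12 : (∑ s ∈ Finset.Icc 1 T, (x s ⬝ᵥ θs)^2)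
        = ∑ s ∈ Finset.Icc 1 T, y s * (x s ⬝ᵥ θs) := by rw [← hSsum, hSy]
    have hynn : 0 ≤ ∑ s ∈ Finset.Icc 1 T, (y s)^2 :=
      Finset.sum_nonneg fun s _ => sq_nonneg _
    nlinarith [hycs, hSnn, hynn]
  have hY2Yr : Y^2 ≤ Yr^2 := pow_le_pow_left₀ hY.le hYrY 2
  have hθsθs : lam * (θs ⬝ᵥ θs) ≤ lam * Yr^2 * T / lammin := by
    have h13 : lammin * (θs ⬝ᵥ θs) ≤ T * Yr^2 := by
      have hTnn : (0:ℝ) ≤ T := Nat.cast_nonneg T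
      calc lammin * (θs ⬝ᵥ θs) ≤ θs ⬝ᵥ (G0 *ᵥ θs) := hray
        _ = ∑ s ∈ Finset.Icc 1 T, (x s ⬝ᵥ θs)^2 := hSsum
        _ ≤ ∑ s ∈ Finset.Icc 1 T, (y s)^2 := hSle
        _ ≤ T * Y^2 := hy2
        _ ≤ T * Yr^2 := by nlinarith
    have h14 : θs ⬝ᵥ θs ≤ T * Yr^2 / lammin := by
      rw [le_div_iff₀ hlamminpos]
      calc (θs ⬝ᵥ θs) * lammin = lammin * (θs ⬝ᵥ θs) := mul_comm _ _
        _ ≤ T * Yr^2 := h13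
    calc lam * (θs ⬝ᵥ θs) ≤ lam * (T * Yr^2 / lammin) :=
        mul_le_mul_of_nonneg_left h14 hlam.le
      _ = lam * Yr^2 * T / lammin := by ring
  -- final assembly
  rw [hR]
  have hchain : (∑ t ∈ Finset.Icc 1 T, (x t ⬝ᵥ θ (t-1) - y t)^2)
      - (∑ t ∈ Finset.Icc 1 T, (x t ⬝ᵥ θs - y t)^2)
      ≤ 4 * Yr ^ 2 * (d:ℝ) * Real.log (1 + T * X ^ 2 / (lam * d))
        + lam * Yr ^ 2 * T / lammin := by
    have e1 : L T (θ T) - L T θs ≤ 0 := by linarith [hLTθs]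
    have e2 : L T θs - (∑ t ∈ Finset.Icc 1 T, (x t ⬝ᵥ θs - y t)^2) = lam * (θs ⬝ᵥ θs) := by
      linarith [hLTθs2]
    have test : (∑ t ∈ Finset.Icc 1 T, (x t ⬝ᵥ θ (t-1) - y t)^2)
        - (∑ t ∈ Finset.Icc 1 T, (x t ⬝ᵥ θs - y t)^2)
        ≤ 4 * Yr ^ 2 * (d:ℝ) * Real.log (1 + T * X ^ 2 / (lam * d)) + lam * (θs ⬝ᵥ θs) := by
      have t1 := add_le_add (add_le_add hS1 e1) e2.le
      calc (∑ t ∈ Finset.Icc 1 T, (x t ⬝ᵥ θ (t-1) - y t)^2)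
            - (∑ t ∈ Finset.Icc 1 T, (x t ⬝ᵥ θs - y t)^2)
          = (((∑ t ∈ Finset.Icc 1 T, (x t ⬝ᵥ θ (t-1) - y t)^2) - L T (θ T))
              + (L T (θ T) - L T θs))
            + (L T θs - (∑ t ∈ Finset.Icc 1 T, (x t ⬝ᵥ θs - y t)^2)) := by ring
        _ ≤ (4 * Yr ^ 2 * (d:ℝ) * Real.log (1 + T * X ^ 2 / (lam * d)) + 0)
            + lam * (θs ⬝ᵥ θs) := t1
        _ = 4 * Yr ^ 2 * (d:ℝ) * Real.log (1 + T * X ^ 2 / (lam * d))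
            + lam * (θs ⬝ᵥ θs) := by ring
    linarith [test, hθsθs]
  linarith [hinf, hchain]
end

section
/- Let λ ≥ 0, X > 0, and let x₁,…,x_T ∈ ℝ^d with ‖x_t‖₂ ≤ X for all t. Let G_t = G_t(λ) := λ I_d + Σ_{s=1}^t x_s x_sᵀ. Let 0 ≤ T₀ < T and assume G_{T₀} is positive definite, with smallest eigenvalue λ_min(G_{T₀}). Then Σ_{t=T₀+1}^{T} ‖x_t‖²_{G_t^{-1}} ≤ d log(1 + T X² / (λ_min(G_{T₀}) d)). -/
open Matrix Finset

section helpers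

variable {d : ℕ}

lemma vmv_posSemidef (v : Fin d → ℝ) : (vecMulVec v v).PosSemidef := by
  rw [posSemidef_iff_dotProduct_mulVec]
  constructor
  · ext i j
    simp [vecMulVec_apply, conjTranspose_apply, mul_comm]
  · intro y
    have : vecMulVec v v *ᵥ y = (v ⬝ᵥ y) • v := by
      ext i
      simp only [vecMulVec_apply, mulVec, dotProduct, Pi.smul_apply, smul_eq_mul,
        Finset.sum_mul]
      exact Finset.sum_congr rfl fun _ _ => by ring
    rw [this]
    simp only [star_trivial, dotProduct_smul, smul_eq_mul]
    have : y ⬝ᵥ v = v ⬝ᵥ y := dotProduct_comm _ _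
    rw [this]
    exact mul_self_nonneg _

lemma sum_vmv_posSemidef (s : Finset ℕ) (x : ℕ → Fin d → ℝ) :
    (∑ t ∈ s, vecMulVec (x t) (x t)).PosSemidef := by
  classical
  induction s using Finset.induction_on with
  | empty => simpa using Matrix.PosSemidef.zero
  | insert _ _ h ih => rw [Finset.sum_insert h]; exact (vmv_posSemidef _).add ih

lemma trace_mul_vmv (A : Matrix (Fin d) (Fin d) ℝ) (v : Fin d → ℝ) :
    (A * vecMulVec v v).trace = v ⬝ᵥ (A *ᵥ v) := by
  simp only [trace, diag_apply, mul_apply, vecMulVec_apply, dotProduct, mulVec, Finset.mul_sum]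
  congr 1; ext i; congr 1; ext j; ring

lemma trace_eq_sum_eig {A : Matrix (Fin d) (Fin d) ℝ} (hA : A.IsHermitian) :
    A.trace = ∑ i, hA.eigenvalues i := by
  have hUU : star (hA.eigenvectorUnitary : Matrix (Fin d) (Fin d) ℝ)
      * (hA.eigenvectorUnitary : Matrix (Fin d) (Fin d) ℝ) = 1 :=
    Matrix.mem_unitaryGroup_iff'.mp hA.eigenvectorUnitary.2
  conv_lhs => rw [hA.spectral_theorem, Unitary.conjStarAlgAut_apply]
  rw [trace_mul_cycle, hUU, one_mul]
  simp [trace_diagonal]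

lemma rayleigh_lower {A : Matrix (Fin d) (Fin d) ℝ} (hA : A.IsHermitian) (c : ℝ)
    (hc : ∀ i, c ≤ hA.eigenvalues i) (y : Fin d → ℝ) :
    c * (y ⬝ᵥ y) ≤ y ⬝ᵥ (A *ᵥ y) := by
  set U : Matrix (Fin d) (Fin d) ℝ := (hA.eigenvectorUnitary : Matrix (Fin d) (Fin d) ℝ) with hU
  have hUU : U * star U = 1 := Matrix.mem_unitaryGroup_iff.mp hA.eigenvectorUnitary.2
  set z : Fin d → ℝ := star U *ᵥ y with hz
  have hzy : vecMul y U = z := by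
    ext i
    simp [hz, vecMul, mulVec, dotProduct, conjTranspose_apply, mul_comm]
  have h1 : y ⬝ᵥ (A *ᵥ y) = ∑ i, hA.eigenvalues i * (z i)^2 := by
    conv_lhs => rw [hA.spectral_theorem, Unitary.conjStarAlgAut_apply]
    rw [← mulVec_mulVec, ← mulVec_mulVec, dotProduct_mulVec, hzy]
    simp only [mulVec_diagonal, dotProduct, Function.comp, ← hz]
    exact Finset.sum_congr rfl fun i _ => by simp only [RCLike.ofReal_real_eq_id, id_eq]; ring
  have h2 : y ⬝ᵥ y = ∑ i, (z i)^2 := by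
    have h0 : y ⬝ᵥ y = y ⬝ᵥ ((U * star U) *ᵥ y) := by rw [hUU]; simp
    rw [h0, ← mulVec_mulVec, dotProduct_mulVec, hzy, ← hz]
    simp [dotProduct, sq]
  rw [h1, h2, Finset.mul_sum]
  exact Finset.sum_le_sum fun i _ => mul_le_mul_of_nonneg_right (hc i) (sq_nonneg _)



lemma quad_inv_le {A : Matrix (Fin d) (Fin d) ℝ} (hA : A.PosDef) (c : ℝ) (hcpos : 0 < c)
    (hc : ∀ i, c ≤ hA.1.eigenvalues i) (v : Fin d → ℝ) :
    v ⬝ᵥ (A⁻¹ *ᵥ v) ≤ (v ⬝ᵥ v) / c := by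
  set y : Fin d → ℝ := A⁻¹ *ᵥ v with hy
  have hAy : A *ᵥ y = v := by
    rw [hy, mulVec_mulVec, Matrix.mul_nonsing_inv _ hA.det_pos.ne'.isUnit, one_mulVec]
  have hq0 : 0 ≤ v ⬝ᵥ y := by
    have := hA.inv.posSemidef.dotProduct_mulVec_nonneg v
    simpa using this
  have hr : c * (y ⬝ᵥ y) ≤ v ⬝ᵥ y := by
    have := rayleigh_lower hA.1 c hc y
    rwa [hAy, dotProduct_comm y v] at this
  have hcs : (v ⬝ᵥ y) ^ 2 ≤ (v ⬝ᵥ v) * (y ⬝ᵥ y) := by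
    have := Finset.sum_mul_sq_le_sq_mul_sq Finset.univ v y
    simpa [dotProduct, sq] using this
  have hvv : 0 ≤ v ⬝ᵥ v := by
    simpa [dotProduct] using Finset.sum_nonneg fun i (_ : i ∈ Finset.univ) => mul_self_nonneg (v i)
  rw [le_div_iff₀ hcpos]
  rcases eq_or_lt_of_le hq0 with h | h
  · rw [← h]; simpa using hvv
  · nlinarith [mul_le_mul_of_nonneg_left hr hvv, mul_le_mul_of_nonneg_left hcs hcpos.le]

lemma det_le_trace_pow {N : Matrix (Fin d) (Fin d) ℝ} (hd : 0 < d) (hN : N.PosSemidef) :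
    N.det ≤ (N.trace / d) ^ d := by
  have hnu : ∀ i, 0 ≤ hN.1.eigenvalues i := hN.eigenvalues_nonneg
  have hdet : N.det = ∏ i, hN.1.eigenvalues i := by
    rw [hN.1.det_eq_prod_eigenvalues]
    simp [RCLike.ofReal_real_eq_id]
  have htr : N.trace = ∑ i, hN.1.eigenvalues i := by
    have hUU : star (hN.1.eigenvectorUnitary : Matrix (Fin d) (Fin d) ℝ)
        * (hN.1.eigenvectorUnitary : Matrix (Fin d) (Fin d) ℝ) = 1 :=
      Matrix.mem_unitaryGroup_iff'.mp hN.1.eigenvectorUnitary.2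
    conv_lhs => rw [hN.1.spectral_theorem, Unitary.conjStarAlgAut_apply]
    rw [trace_mul_cycle, hUU, one_mul]
    simp [trace_diagonal]
  have hgm := Real.geom_mean_le_arith_mean_weighted Finset.univ (fun _ => (d:ℝ)⁻¹)
    hN.1.eigenvalues (fun _ _ => by positivity)
    (by simp [Finset.card_univ]; field_simp) (fun i _ => hnu i)
  have hkey : (∏ i, hN.1.eigenvalues i ^ ((d:ℝ)⁻¹)) ^ d = ∏ i, hN.1.eigenvalues i := by
    rw [← Finset.prod_pow]
    refine Finset.prod_congr rfl fun i _ => ?_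
    rw [← Real.rpow_natCast (hN.1.eigenvalues i ^ ((d:ℝ)⁻¹)) d, ← Real.rpow_mul (hnu i),
      inv_mul_cancel₀ (by exact_mod_cast hd.ne'), Real.rpow_one]
  have hL : 0 ≤ ∏ i, hN.1.eigenvalues i ^ ((d:ℝ)⁻¹) :=
    Finset.prod_nonneg fun i _ => Real.rpow_nonneg (hnu i) _
  calc N.det = (∏ i, hN.1.eigenvalues i ^ ((d:ℝ)⁻¹)) ^ d := by rw [hkey, hdet]
    _ ≤ (∑ i, (d:ℝ)⁻¹ * hN.1.eigenvalues i) ^ d := pow_le_pow_left₀ hL hgm d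
    _ = (N.trace / d) ^ d := by rw [htr, ← Finset.mul_sum]; ring_nf

open scoped MatrixOrder in
lemma det_ratio_le {G S : Matrix (Fin d) (Fin d) ℝ} (hd : 0 < d) (hG : G.PosDef)
    (hS : S.PosSemidef)
    (hdet : ∀ N : Matrix (Fin d) (Fin d) ℝ, N.PosSemidef → N.det ≤ (N.trace / d) ^ d) :
    (G + S).det ≤ G.det * (1 + (G⁻¹ * S).trace / d) ^ d := by
  have hinv : G⁻¹.PosDef := hG.inv
  set R := CFC.sqrt G⁻¹ with hRdef
  have hR : R.PosSemidef := nonneg_iff_posSemidef.mp (CFC.sqrt_nonneg _)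
  have hRR : R * R = G⁻¹ := CFC.sqrt_mul_sqrt_self _ hinv.posSemidef.nonneg
  set N : Matrix (Fin d) (Fin d) ℝ := 1 + R * S * R with hNdef
  have hN : N.PosSemidef := by
    have h1 : (R * S * Rᴴ).PosSemidef := hS.mul_mul_conjTranspose_same R
    rw [hR.1] at h1
    exact Matrix.PosSemidef.add Matrix.PosSemidef.one h1
  have hdeteq : (G + S).det = G.det * N.det := by
    have h0 : G * (1 + G⁻¹ * S) = G + S := by
      rw [Matrix.mul_add, Matrix.mul_one, ← Matrix.mul_assoc,
        Matrix.mul_nonsing_inv _ hG.det_pos.ne'.isUnit, Matrix.one_mul]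
    rw [← h0, det_mul]
    congr 1
    have : (1 : Matrix (Fin d) (Fin d) ℝ) + G⁻¹ * S = 1 + R * (R * S) := by
      rw [← Matrix.mul_assoc, hRR]
    rw [this, det_one_add_mul_comm, hNdef, Matrix.mul_assoc]
  have htr : N.trace = d + (G⁻¹ * S).trace := by
    rw [hNdef, trace_add, trace_one]
    congr 1
    · simp
    · rw [trace_mul_cycle, hRR]
  have hfin : N.det ≤ (1 + (G⁻¹ * S).trace / d) ^ d := by
    have := hdet N hN
    rw [htr] at this
    rwa [show ((d:ℝ) + (G⁻¹ * S).trace) / d = 1 + (G⁻¹ * S).trace / d by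
      rw [add_div, div_self (by exact_mod_cast hd.ne' : (d:ℝ) ≠ 0)]] at this
  rw [hdeteq]
  exact mul_le_mul_of_nonneg_left hfin hG.det_pos.le

lemma step_ineq {A : Matrix (Fin d) (Fin d) ℝ} (hA : A.PosDef) (v : Fin d → ℝ)
    (hvmv : (vecMulVec v v).PosSemidef) :
    v ⬝ᵥ ((A + vecMulVec v v)⁻¹ *ᵥ v)
      ≤ Real.log (A + vecMulVec v v).det - Real.log A.det := by
  set B := A + vecMulVec v v with hBdef
  have hB : B.PosDef := hA.add_posSemidef hvmv
  set q := v ⬝ᵥ (B⁻¹ *ᵥ v) with hq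
  have hdetA : A.det = B.det * (1 - q) := by
    have h1 : A = B + replicateCol Unit (-v) * replicateRow Unit v := by
      rw [← vecMulVec_eq Unit]
      have : vecMulVec (-v) v = -vecMulVec v v := by
        ext i j; simp [vecMulVec_apply]
      rw [this, hBdef]
      exact (add_neg_cancel_right _ _).symm
    have h2 := Matrix.det_add_replicateCol_mul_replicateRow (ι := Unit) hB.det_pos.ne'.isUnit (-v) v
    rw [← h1] at h2
    rw [h2]
    congr 1
    rw [det_unique]
    simp only [Matrix.add_apply, one_apply_eq, mul_apply, replicateRow_apply, replicateCol_apply, Finset.univ_unique,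
      Finset.sum_singleton]
    rw [hq]
    simp [dotProduct, mulVec, Finset.mul_sum, Finset.sum_mul]
    rw [sub_eq_add_neg]
    congr 1
    rw [neg_inj, Finset.sum_comm]
    exact Finset.sum_congr rfl fun x _ => Finset.sum_congr rfl fun i _ => by ring
  have hdA := hA.det_pos
  have hdB := hB.det_pos
  have hqlt : 1 - q = A.det / B.det := by
    field_simp [hdetA]
    rw [hdetA]; ring
  have hratio : 0 < A.det / B.det := div_pos hdA hdB
  have hlog := Real.log_le_sub_one_of_pos hratio
  rw [Real.log_div hdA.ne' hdB.ne'] at hlog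
  have : q = 1 - A.det / B.det := by rw [← hqlt]; ring
  rw [this]
  linarith

end helpers

theorem stmt_3 {d : ℕ} (hd : 0 < d) (lam X : ℝ) (hlam : 0 ≤ lam) (hX : 0 < X)
    (T₀ T : ℕ) (hT : T₀ < T)
    (x : ℕ → Fin d → ℝ)
    (hx : ∀ t ∈ Finset.Icc 1 T, Real.sqrt (x t ⬝ᵥ x t) ≤ X)
    (G : ℕ → Matrix (Fin d) (Fin d) ℝ)
    (hG : ∀ t, G t = lam • (1 : Matrix (Fin d) (Fin d) ℝ)
      + ∑ s ∈ Finset.Icc 1 t, vecMulVec (x s) (x s))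
    (hpd : (G T₀).PosDef)
    (lammin : ℝ) (hlammin : lammin = ⨅ i, hpd.1.eigenvalues i) :
    ∑ t ∈ Finset.Icc (T₀ + 1) T, x t ⬝ᵥ ((G t)⁻¹ *ᵥ x t)
      ≤ d * Real.log (1 + T * X ^ 2 / (lammin * d)) := by
  -- splitting of G
  have hsplit : ∀ t, T₀ ≤ t → G t = G T₀ + ∑ s ∈ Finset.Ioc T₀ t, vecMulVec (x s) (x s) := by
    intro t ht
    rw [hG t, hG T₀, add_assoc]
    congr 1
    have h1 : ∀ u, Finset.Icc 1 u = Finset.Ioc 0 u := fun u => by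
      rw [← Finset.Icc_add_one_left_eq_Ioc, zero_add]
    rw [h1 t, h1 T₀,
      ← Finset.sum_Ioc_consecutive (fun s => vecMulVec (x s) (x s)) (Nat.zero_le T₀) ht]
  have hpd' : ∀ t, T₀ ≤ t → (G t).PosDef := by
    intro t ht
    rw [hsplit t ht]
    exact hpd.add_posSemidef (sum_vmv_posSemidef _ x)
  have hsucc : ∀ k, G (k + 1) = G k + vecMulVec (x (k + 1)) (x (k + 1)) := by
    intro k
    rw [hG (k + 1), hG k, Finset.sum_Icc_succ_top (Nat.one_le_iff_ne_zero.mpr (Nat.succ_ne_zero k)),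
      add_assoc]
  -- lammin positivity and bound
  have hbdd : BddBelow (Set.range hpd.1.eigenvalues) := (Set.finite_range _).bddBelow
  have hlm_le : ∀ i, lammin ≤ hpd.1.eigenvalues i := fun i => hlammin ▸ ciInf_le hbdd i
  have hlmpos : 0 < lammin := by
    have hne : Nonempty (Fin d) := ⟨⟨0, hd⟩⟩
    obtain ⟨i, hi⟩ := exists_eq_ciInf_of_finite (f := hpd.1.eigenvalues)
    rw [hlammin, ← hi]
    exact hpd.eigenvalues_pos i
  -- step 1 : telescoping
  have htele : ∑ t ∈ Finset.Icc (T₀ + 1) T, x t ⬝ᵥ ((G t)⁻¹ *ᵥ x t)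
      ≤ Real.log (G T).det - Real.log (G T₀).det := by
    have hre : Finset.Icc (T₀ + 1) T = Finset.Ico (T₀ + 1) (T + 1) := by
      rw [Finset.Ico_add_one_right_eq_Icc]
    rw [hre, Finset.sum_Ico_eq_sum_range]
    have hcard : T + 1 - (T₀ + 1) = T - T₀ := by omega
    rw [hcard]
    have hstep : ∀ i ∈ Finset.range (T - T₀),
        x (T₀ + 1 + i) ⬝ᵥ ((G (T₀ + 1 + i))⁻¹ *ᵥ x (T₀ + 1 + i))
          ≤ Real.log (G (T₀ + (i + 1))).det - Real.log (G (T₀ + i)).det := by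
      intro i _
      have hidx : T₀ + 1 + i = (T₀ + i) + 1 := by omega
      rw [hidx, hsucc (T₀ + i), show T₀ + (i + 1) = (T₀ + i) + 1 by omega, hsucc (T₀ + i)]
      exact step_ineq (hpd' _ (Nat.le_add_right _ _)) _ (vmv_posSemidef _)
    calc ∑ i ∈ Finset.range (T - T₀), x (T₀ + 1 + i) ⬝ᵥ ((G (T₀ + 1 + i))⁻¹ *ᵥ x (T₀ + 1 + i))
        ≤ ∑ i ∈ Finset.range (T - T₀),
            (Real.log (G (T₀ + (i + 1))).det - Real.log (G (T₀ + i)).det) :=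
          Finset.sum_le_sum hstep
      _ = Real.log (G (T₀ + (T - T₀))).det - Real.log (G (T₀ + 0)).det :=
          Finset.sum_range_sub (fun i => Real.log (G (T₀ + i)).det) (T - T₀)
      _ = Real.log (G T).det - Real.log (G T₀).det := by
          rw [show T₀ + (T - T₀) = T by omega, Nat.add_zero]
  -- step 2 : log det bound
  set S : Matrix (Fin d) (Fin d) ℝ := ∑ s ∈ Finset.Ioc T₀ T, vecMulVec (x s) (x s) with hSdef
  have hS : S.PosSemidef := sum_vmv_posSemidef _ x
  have hGT : G T = G T₀ + S := hsplit T hT.le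
  set t0 : ℝ := ((G T₀)⁻¹ * S).trace with ht0def
  have ht0eq : t0 = ∑ s ∈ Finset.Ioc T₀ T, x s ⬝ᵥ ((G T₀)⁻¹ *ᵥ x s) := by
    rw [ht0def, hSdef, Finset.mul_sum, trace_sum]
    exact Finset.sum_congr rfl fun s _ => trace_mul_vmv _ _
  have hxX : ∀ s ∈ Finset.Ioc T₀ T, x s ⬝ᵥ x s ≤ X ^ 2 := by
    intro s hs
    rw [Finset.mem_Ioc] at hs
    have hs' : s ∈ Finset.Icc 1 T := Finset.mem_Icc.mpr ⟨by omega, hs.2⟩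
    have h0 : 0 ≤ x s ⬝ᵥ x s := by
      simpa [dotProduct] using
        Finset.sum_nonneg fun i (_ : i ∈ Finset.univ) => mul_self_nonneg (x s i)
    calc x s ⬝ᵥ x s = Real.sqrt (x s ⬝ᵥ x s) ^ 2 := (Real.sq_sqrt h0).symm
      _ ≤ X ^ 2 := pow_le_pow_left₀ (Real.sqrt_nonneg _) (hx s hs') 2
  have ht0le : t0 ≤ T * X ^ 2 / lammin := by
    rw [ht0eq]
    calc ∑ s ∈ Finset.Ioc T₀ T, x s ⬝ᵥ ((G T₀)⁻¹ *ᵥ x s)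
        ≤ ∑ s ∈ Finset.Ioc T₀ T, X ^ 2 / lammin := by
          refine Finset.sum_le_sum fun s hs => ?_
          calc x s ⬝ᵥ ((G T₀)⁻¹ *ᵥ x s) ≤ (x s ⬝ᵥ x s) / lammin :=
                quad_inv_le hpd lammin hlmpos hlm_le (x s)
            _ ≤ X ^ 2 / lammin := by gcongr; exact hxX s hs
      _ = (T - T₀ : ℕ) * (X ^ 2 / lammin) := by
          rw [Finset.sum_const, Nat.card_Ioc, nsmul_eq_mul]
      _ ≤ T * (X ^ 2 / lammin) := by
          refine mul_le_mul_of_nonneg_right ?_ (by positivity)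
          exact_mod_cast Nat.cast_le.mpr (Nat.sub_le T T₀)
      _ = T * X ^ 2 / lammin := by ring
  have ht0nn : 0 ≤ t0 := by
    rw [ht0eq]
    refine Finset.sum_nonneg fun s _ => ?_
    have := hpd.inv.posSemidef.dotProduct_mulVec_nonneg (x s)
    simpa using this
  have hdT0 : 0 < (G T₀).det := hpd.det_pos
  have hdT : 0 < (G T).det := (hpd' T hT.le).det_pos
  have hdratio := det_ratio_le hd hpd hS (fun N hN => det_le_trace_pow hd hN)
  rw [← hGT, ← ht0def] at hdratio
  have hdpos : (0:ℝ) < d := by exact_mod_cast hd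
  have h1pos : (0:ℝ) < 1 + t0 / d := by positivity
  have hlogbound : Real.log (G T).det - Real.log (G T₀).det
      ≤ d * Real.log (1 + t0 / d) := by
    have h2 : Real.log (G T).det ≤ Real.log ((G T₀).det * (1 + t0 / d) ^ d) :=
      Real.log_le_log hdT hdratio
    rw [Real.log_mul hdT0.ne' (by positivity), Real.log_pow] at h2
    linarith
  have hmono : Real.log (1 + t0 / d) ≤ Real.log (1 + T * X ^ 2 / (lammin * d)) := by
    refine Real.log_le_log h1pos ?_
    have : t0 / d ≤ T * X ^ 2 / (lammin * d) := by
      rw [show (T:ℝ) * X ^ 2 / (lammin * d) = (T * X ^ 2 / lammin) / d by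
        field_simp]
      gcongr
    linarith
  calc ∑ t ∈ Finset.Icc (T₀ + 1) T, x t ⬝ᵥ ((G t)⁻¹ *ᵥ x t)
      ≤ Real.log (G T).det - Real.log (G T₀).det := htele
    _ ≤ d * Real.log (1 + t0 / d) := hlogbound
    _ ≤ d * Real.log (1 + T * X ^ 2 / (lammin * d)) :=
        mul_le_mul_of_nonneg_left hmono hdpos.le
end

section
/- Let λ > 0, X > 0, and let x₁,…,x_T ∈ ℝ^d with ‖x_t‖₂ ≤ X for all t. Let G_t = G_t(λ) := λ I_d + Σ_{s=1}^t x_s x_sᵀ (so G_0 = λ I_d). Then Σ_{t=1}^{T} ‖x_t‖²_{G_{t-1}^{-1}} ≤ (X²/λ) / log(1 + X²/λ) · d log(1 + T X² / (λ d)). -/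
open Matrix Finset

theorem aux_vecMulVec_psd {d : ℕ} (x : Fin d → ℝ) : (vecMulVec x x).PosSemidef := by
  refine Matrix.PosSemidef.of_dotProduct_mulVec_nonneg ?_ ?_
  · ext i j; simp [vecMulVec, conjTranspose_apply, mul_comm]
  · intro v
    have h : vecMulVec x x *ᵥ v = (x ⬝ᵥ v) • x := by
      ext i
      simp only [vecMulVec, mulVec, dotProduct, of_apply, Pi.smul_apply, smul_eq_mul,
        Finset.sum_mul]
      exact Finset.sum_congr rfl fun j _ => by ring
    rw [h]
    simp only [star_trivial, dotProduct_smul, smul_eq_mul]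
    rw [dotProduct_comm]
    exact mul_self_nonneg _

theorem aux_smul_one_pd {d : ℕ} (lam : ℝ) (hlam : 0 < lam) :
    (lam • (1 : Matrix (Fin d) (Fin d) ℝ)).PosDef := by
  refine Matrix.PosDef.of_dotProduct_mulVec_pos ?_ ?_
  · ext i j; simp [conjTranspose_apply, one_apply]; simp [eq_comm]
  · intro v hv
    rw [smul_mulVec, dotProduct_smul, one_mulVec]
    exact mul_pos hlam (by simpa using dotProduct_star_self_pos_iff.mpr hv)

theorem aux_G_pd {d : ℕ} (lam : ℝ) (hlam : 0 < lam) (x : ℕ → Fin d → ℝ) (t : ℕ) :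
    (lam • (1 : Matrix (Fin d) (Fin d) ℝ)
      + ∑ s ∈ Finset.Icc 1 t, vecMulVec (x s) (x s)).PosDef := by
  have hpsd : (∑ s ∈ Finset.Icc 1 t, vecMulVec (x s) (x s)).PosSemidef :=
    Finset.sum_induction _ _ (fun a b ha hb => ha.add hb) (Matrix.PosSemidef.zero)
      (fun s _ => aux_vecMulVec_psd (x s))
  have h1 := aux_smul_one_pd (d := d) lam hlam
  refine Matrix.PosDef.of_dotProduct_mulVec_pos ?_ ?_
  · exact h1.1.add hpsd.1
  · intro v hv
    rw [add_mulVec, dotProduct_add]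
    exact add_pos_of_pos_of_nonneg (h1.dotProduct_mulVec_pos hv) (hpsd.dotProduct_mulVec_nonneg v)

theorem aux_w_nonneg {d : ℕ} {M : Matrix (Fin d) (Fin d) ℝ} (hM : M.PosDef)
    (x : Fin d → ℝ) : 0 ≤ x ⬝ᵥ (M⁻¹ *ᵥ x) := by
  simpa using hM.inv.posSemidef.dotProduct_mulVec_nonneg x

theorem aux_w_le {d : ℕ} {M : Matrix (Fin d) (Fin d) ℝ} (hM : M.PosDef)
    {lam : ℝ} (hlam : 0 < lam) (hMl : (M - lam • (1 : Matrix (Fin d) (Fin d) ℝ)).PosSemidef)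
    {x : Fin d → ℝ} {X : ℝ} (hxX : x ⬝ᵥ x ≤ X ^ 2) :
    x ⬝ᵥ (M⁻¹ *ᵥ x) ≤ X ^ 2 / lam := by
  set y := M⁻¹ *ᵥ x with hy
  have hMy : M *ᵥ y = x := by
    rw [hy, mulVec_mulVec, Matrix.mul_nonsing_inv _ hM.det_pos.ne'.isUnit, one_mulVec]
  have hq0 : 0 ≤ y ⬝ᵥ y := by
    simpa using dotProduct_star_self_nonneg y
  have hx0 : 0 ≤ x ⬝ᵥ x := by
    simpa using dotProduct_star_self_nonneg x
  have h1 : lam * (y ⬝ᵥ y) ≤ x ⬝ᵥ y := by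
    have := hMl.dotProduct_mulVec_nonneg y
    simp only [star_trivial, sub_mulVec, dotProduct_sub, smul_mulVec, one_mulVec,
      dotProduct_smul, smul_eq_mul, sub_nonneg, hMy] at this
    rw [dotProduct_comm y x] at this
    exact this
  have h2 : (x ⬝ᵥ y) ^ 2 ≤ (x ⬝ᵥ x) * (y ⬝ᵥ y) := by
    have := Finset.sum_mul_sq_le_sq_mul_sq Finset.univ x y
    simpa [dotProduct, pow_two, Finset.sum_mul_sq_le_sq_mul_sq] using this
  have ha0 : 0 ≤ x ⬝ᵥ y := le_trans (by positivity) h1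
  rcases eq_or_lt_of_le ha0 with h | h
  · exact le_trans h.symm.le (div_nonneg (hx0.trans hxX) hlam.le)
  · have h3 : (lam * (x ⬝ᵥ y)) * (x ⬝ᵥ y) ≤ (x ⬝ᵥ x) * (x ⬝ᵥ y) := by
      nlinarith [mul_le_mul_of_nonneg_left h1 hx0]
    have h4 : lam * (x ⬝ᵥ y) ≤ x ⬝ᵥ x := (mul_le_mul_iff_of_pos_right h).mp h3
    rw [le_div_iff₀ hlam]
    calc x ⬝ᵥ y * lam = lam * (x ⬝ᵥ y) := mul_comm _ _
    _ ≤ x ⬝ᵥ x := h4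
    _ ≤ X ^ 2 := hxX

theorem aux_det_rec {d : ℕ} {M : Matrix (Fin d) (Fin d) ℝ} (hM : M.PosDef) (x : Fin d → ℝ) :
    (M + vecMulVec x x).det = M.det * (1 + x ⬝ᵥ (M⁻¹ *ᵥ x)) := by
  rw [vecMulVec_eq (Fin 1), det_add_mul _ _ hM.det_pos.ne'.isUnit]
  congr 1
  rw [Matrix.mul_assoc, ← replicateCol_mulVec M⁻¹ x, det_unique]
  rw [Matrix.add_apply, Matrix.one_apply_eq, replicateRow_mul_replicateCol_apply]

theorem aux_trace_eq {d : ℕ} {M : Matrix (Fin d) (Fin d) ℝ} (hH : M.IsHermitian) :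
    M.trace = ∑ i, hH.eigenvalues i := by
  rw [hH.trace_eq_sum_eigenvalues]
  simp

theorem aux_logdet_le {d : ℕ} (hd : 0 < d) {M : Matrix (Fin d) (Fin d) ℝ} (hM : M.PosDef) :
    Real.log M.det ≤ d * Real.log (M.trace / d) := by
  have hH := hM.1
  have hpos : ∀ i, 0 < hH.eigenvalues i := hM.eigenvalues_pos
  have hdet : M.det = ∏ i, hH.eigenvalues i := by
    simpa using hH.det_eq_prod_eigenvalues
  have hd' : (d : ℝ) ≠ 0 := Nat.cast_ne_zero.mpr hd.ne'
  have jensen := (strictConcaveOn_log_Ioi.concaveOn).le_map_sum (t := Finset.univ)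
    (w := fun _ : Fin d => (d : ℝ)⁻¹) (p := hH.eigenvalues)
    (fun _ _ => by positivity) (by simp [Finset.card_univ, mul_comm]; field_simp)
    (fun i _ => hpos i)
  rw [hdet, Real.log_prod (fun i _ => (hpos i).ne')]
  have h2 : ∑ i, (d : ℝ)⁻¹ • hH.eigenvalues i = M.trace / d := by
    rw [aux_trace_eq hH, ← Finset.smul_sum]
    simp [div_eq_inv_mul, smul_eq_mul]
  have h3 : ∑ i, (d : ℝ)⁻¹ • Real.log (hH.eigenvalues i)
      = (d : ℝ)⁻¹ * ∑ i, Real.log (hH.eigenvalues i) := by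
    rw [← Finset.smul_sum]; simp
  rw [h2, h3] at jensen
  calc ∑ i, Real.log (hH.eigenvalues i)
      = (d : ℝ) * ((d : ℝ)⁻¹ * ∑ i, Real.log (hH.eigenvalues i)) := by
        field_simp
    _ ≤ (d : ℝ) * Real.log (M.trace / d) := by
        exact mul_le_mul_of_nonneg_left jensen (by positivity)

theorem aux_scalar {B u : ℝ} (hB : 0 < B) (hu0 : 0 ≤ u) (huB : u ≤ B) :
    u ≤ B / Real.log (1 + B) * Real.log (1 + u) := by
  have hL : 0 < Real.log (1 + B) := Real.log_pos (by linarith)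
  have hconc := strictConcaveOn_log_Ioi.concaveOn.2
    (show (1 : ℝ) ∈ Set.Ioi 0 from Set.mem_Ioi.mpr one_pos)
    (show (1 + B : ℝ) ∈ Set.Ioi 0 from Set.mem_Ioi.mpr (by linarith))
    (show (0:ℝ) ≤ 1 - u / B by rw [sub_nonneg]; exact div_le_one_of_le₀ huB hB.le)
    (show (0:ℝ) ≤ u / B by positivity)
    (show (1 - u / B) + u / B = 1 by ring)
  have harg : (1 - u / B) • (1 : ℝ) + (u / B) • (1 + B) = 1 + u := by
    simp only [smul_eq_mul]; field_simp; ring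
  rw [harg, Real.log_one, smul_zero, zero_add, smul_eq_mul] at hconc
  calc u = B / Real.log (1 + B) * (u / B * Real.log (1 + B)) := by
        field_simp
    _ ≤ B / Real.log (1 + B) * Real.log (1 + u) :=
        mul_le_mul_of_nonneg_left hconc (div_pos hB hL).le

theorem stmt_4 {d : ℕ} (lam X : ℝ) (hlam : 0 < lam) (hX : 0 < X) (T : ℕ)
    (x : ℕ → Fin d → ℝ)
    (hx : ∀ t ∈ Finset.Icc 1 T, Real.sqrt (x t ⬝ᵥ x t) ≤ X)
    (G : ℕ → Matrix (Fin d) (Fin d) ℝ)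
    (hG : ∀ t, G t = lam • (1 : Matrix (Fin d) (Fin d) ℝ)
      + ∑ s ∈ Finset.Icc 1 t, vecMulVec (x s) (x s)) :
    ∑ t ∈ Finset.Icc 1 T, x t ⬝ᵥ ((G (t - 1))⁻¹ *ᵥ x t)
      ≤ (X ^ 2 / lam) / Real.log (1 + X ^ 2 / lam)
        * (d * Real.log (1 + T * X ^ 2 / (lam * d))) := by
  have hB : 0 < X ^ 2 / lam := by positivity
  have hL : 0 < Real.log (1 + X ^ 2 / lam) := Real.log_pos (by linarith)
  rcases Nat.eq_zero_or_pos d with hd | hd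
  · subst hd
    simp [dotProduct]
  -- main case
  have hGpd : ∀ t, (G t).PosDef := fun t => hG t ▸ aux_G_pd lam hlam x t
  have hGsub : ∀ t, (G t - lam • (1 : Matrix (Fin d) (Fin d) ℝ)).PosSemidef := by
    intro t
    rw [hG t, add_sub_cancel_left]
    exact Finset.sum_induction _ _ (fun a b ha hb => ha.add hb) Matrix.PosSemidef.zero
      (fun s _ => aux_vecMulVec_psd (x s))
  set w : ℕ → ℝ := fun t => x t ⬝ᵥ ((G (t - 1))⁻¹ *ᵥ x t) with hw
  have hw0 : ∀ t, 0 ≤ w t := fun t => aux_w_nonneg (hGpd _) _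
  have hxsq : ∀ t ∈ Finset.Icc 1 T, x t ⬝ᵥ x t ≤ X ^ 2 := by
    intro t ht
    have h0 : 0 ≤ x t ⬝ᵥ x t := by simpa using dotProduct_star_self_nonneg (x t)
    calc x t ⬝ᵥ x t = Real.sqrt (x t ⬝ᵥ x t) ^ 2 := (Real.sq_sqrt h0).symm
    _ ≤ X ^ 2 := pow_le_pow_left₀ (Real.sqrt_nonneg _) (hx t ht) 2
  have hwB : ∀ t ∈ Finset.Icc 1 T, w t ≤ X ^ 2 / lam := fun t ht =>
    aux_w_le (hGpd _) hlam (hGsub _) (hxsq t ht)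
  have hdetpos : ∀ t, 0 < (G t).det := fun t => (hGpd t).det_pos
  have hrec : ∀ n : ℕ, (G (n + 1)).det = (G n).det * (1 + w (n + 1)) := by
    intro n
    have hstep : G (n + 1) = G n + vecMulVec (x (n + 1)) (x (n + 1)) := by
      rw [hG (n + 1), hG n, Finset.sum_Icc_succ_top (Nat.succ_le_succ (Nat.zero_le n)),
        add_assoc]
    rw [hstep, aux_det_rec (hGpd n)]
    simp [hw]
  have tel : ∀ n : ℕ, Real.log (G n).det
      = Real.log (G 0).det + ∑ t ∈ Finset.Icc 1 n, Real.log (1 + w t) := by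
    intro n
    induction n with
    | zero => simp
    | succ n ih =>
      have hpos : (0 : ℝ) < 1 + w (n + 1) := by have := hw0 (n + 1); linarith
      rw [Finset.sum_Icc_succ_top (Nat.succ_le_succ (Nat.zero_le n)), hrec n,
        Real.log_mul (hdetpos n).ne' hpos.ne', ih]
      ring
  -- trace bound
  have htr_eq : (G T).trace
      = lam * d + ∑ s ∈ Finset.Icc 1 T, (x s ⬝ᵥ x s) := by
    rw [hG T, trace_add, trace_smul, trace_one, trace_sum]
    simp only [smul_eq_mul]
    congr 1
    · simp
  have htr_le : (G T).trace ≤ lam * d + T * X ^ 2 := by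
    rw [htr_eq]
    have : ∑ s ∈ Finset.Icc 1 T, (x s ⬝ᵥ x s) ≤ ∑ s ∈ Finset.Icc 1 T, X ^ 2 :=
      Finset.sum_le_sum hxsq
    simp only [Finset.sum_const, Nat.card_Icc, Nat.add_sub_cancel, nsmul_eq_mul] at this
    linarith
  have htr_pos : 0 < (G T).trace := by
    rw [htr_eq]
    have h0 : (0:ℝ) ≤ ∑ s ∈ Finset.Icc 1 T, (x s ⬝ᵥ x s) :=
      Finset.sum_nonneg fun s _ => by simpa using dotProduct_star_self_nonneg (x s)
    have : (0:ℝ) < lam * d := by positivity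
    linarith
  have hd' : (0:ℝ) < (d : ℝ) := by exact_mod_cast hd
  have hu0 : (0:ℝ) ≤ T * X ^ 2 / (lam * d) := by positivity
  have hfac : (lam * d + T * X ^ 2) / (d : ℝ)
      = lam * (1 + T * X ^ 2 / (lam * d)) := by
    field_simp
  have hlog1 : Real.log (G T).det
      ≤ d * (Real.log lam + Real.log (1 + T * X ^ 2 / (lam * d))) := by
    refine le_trans (aux_logdet_le hd (hGpd T)) ?_
    refine mul_le_mul_of_nonneg_left ?_ hd'.le
    rw [← Real.log_mul hlam.ne' (by linarith : (1 + T * X ^ 2 / (lam * d) : ℝ) ≠ 0), ← hfac]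
    exact Real.log_le_log (by positivity) (by gcongr)
  have hGdet0 : (G 0).det = lam ^ d := by
    rw [hG 0]; simp
  have hlog0 : Real.log (G 0).det = d * Real.log lam := by
    rw [hGdet0, Real.log_pow]
  have key2 : ∑ t ∈ Finset.Icc 1 T, Real.log (1 + w t)
      ≤ d * Real.log (1 + T * X ^ 2 / (lam * d)) := by
    have htel := tel T
    rw [hlog0] at htel
    have := hlog1
    nlinarith [htel, hlog1]
  calc ∑ t ∈ Finset.Icc 1 T, w t
      ≤ ∑ t ∈ Finset.Icc 1 T,
          (X ^ 2 / lam) / Real.log (1 + X ^ 2 / lam) * Real.log (1 + w t) :=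
        Finset.sum_le_sum fun t ht => aux_scalar hB (hw0 t) (hwB t ht)
    _ = (X ^ 2 / lam) / Real.log (1 + X ^ 2 / lam)
          * ∑ t ∈ Finset.Icc 1 T, Real.log (1 + w t) :=
        (Finset.mul_sum _ _ _).symm
    _ ≤ _ := mul_le_mul_of_nonneg_left key2 (div_pos hB hL).le
end

section
/- Let λ > 0, X > 0, θ* ∈ ℝ^d, t ≥ 1, vectors x₁,…,x_{t+1} ∈ ℝ^d with ‖x_{t+1}‖₂ ≤ X, reals ε₁,…,ε_t, and y_s := ⟨x_s, θ*⟩ + ε_s. Let G_{t+1} := λ I_d + Σ_{s=1}^{t+1} x_s x_sᵀ and θ_t^f := G_{t+1}^{-1} Σ_{s=1}^{t} x_s y_s. Then for every x ∈ ℝ^d: |⟨x, θ_t^f − θ*⟩| ≤ ‖x‖_{G_{t+1}^{-1}} ( ‖Σ_{s=1}^t ε_s x_s‖_{G_{t+1}^{-1}} + (√λ + X) ‖θ*‖₂ ). -/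
open Matrix Finset

lemma dot_cs {d : ℕ} (a b : Fin d → ℝ) :
    |a ⬝ᵥ b| ≤ Real.sqrt (a ⬝ᵥ a) * Real.sqrt (b ⬝ᵥ b) := by
  have key : ∀ c : Fin d → ℝ, c ⬝ᵥ b ≤ Real.sqrt (c ⬝ᵥ c) * Real.sqrt (b ⬝ᵥ b) := by
    intro c
    have h := Real.sum_mul_le_sqrt_mul_sqrt Finset.univ c b
    simpa [dotProduct, pow_two] using h
  rw [abs_le]
  refine ⟨?_, key a⟩
  have h := key (-a)
  have h1 : (-a) ⬝ᵥ (-a) = a ⬝ᵥ a := by simp [dotProduct]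
  have h2 : (-a) ⬝ᵥ b = -(a ⬝ᵥ b) := by simp [dotProduct]
  rw [h1, h2] at h
  linarith

open scoped MatrixOrder in
lemma cs_psd {d : ℕ} {A : Matrix (Fin d) (Fin d) ℝ} (hA : A.PosSemidef)
    (v w : Fin d → ℝ) :
    |v ⬝ᵥ (A *ᵥ w)| ≤ Real.sqrt (v ⬝ᵥ (A *ᵥ v)) * Real.sqrt (w ⬝ᵥ (A *ᵥ w)) := by
  classical
  have hSt : (CFC.sqrt A)ᵀ = CFC.sqrt A := by
    rw [← conjTranspose_eq_transpose_of_trivial]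
    exact (CFC.sqrt_nonneg A).posSemidef.isHermitian
  have hvm : ∀ u : Fin d → ℝ, u ᵥ* CFC.sqrt A = CFC.sqrt A *ᵥ u := by
    intro u
    rw [← hSt, vecMul_transpose, hSt]
  have key : ∀ u z : Fin d → ℝ, u ⬝ᵥ (A *ᵥ z) = (CFC.sqrt A *ᵥ u) ⬝ᵥ (CFC.sqrt A *ᵥ z) := by
    intro u z
    have h1 : u ⬝ᵥ ((CFC.sqrt A * CFC.sqrt A) *ᵥ z) = (CFC.sqrt A *ᵥ u) ⬝ᵥ (CFC.sqrt A *ᵥ z) := by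
      rw [← mulVec_mulVec, dotProduct_mulVec, hvm]
    rw [← h1, CFC.sqrt_mul_sqrt_self A hA.nonneg]
  rw [key v w, key v v, key w w]
  exact dot_cs _ _

theorem stmt_10 {d : ℕ} (lam X : ℝ) (hlam : 0 < lam) (hX : 0 < X)
    (θs : Fin d → ℝ) (t : ℕ) (ht : 1 ≤ t)
    (x : ℕ → Fin d → ℝ)
    (hxt1 : Real.sqrt (x (t + 1) ⬝ᵥ x (t + 1)) ≤ X)
    (ε : ℕ → ℝ)
    (y : ℕ → ℝ) (hy : ∀ s ∈ Finset.Icc 1 t, y s = x s ⬝ᵥ θs + ε s)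
    (G : Matrix (Fin d) (Fin d) ℝ)
    (hG : G = lam • (1 : Matrix (Fin d) (Fin d) ℝ)
      + ∑ s ∈ Finset.Icc 1 (t + 1), vecMulVec (x s) (x s))
    (θf : Fin d → ℝ)
    (hθf : θf = G⁻¹ *ᵥ (∑ s ∈ Finset.Icc 1 t, y s • x s)) :
    ∀ v : Fin d → ℝ,
      |v ⬝ᵥ (θf - θs)| ≤ Real.sqrt (v ⬝ᵥ (G⁻¹ *ᵥ v)) *
        (Real.sqrt ((∑ s ∈ Finset.Icc 1 t, ε s • x s)
            ⬝ᵥ (G⁻¹ *ᵥ (∑ s ∈ Finset.Icc 1 t, ε s • x s)))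
          + (Real.sqrt lam + X) * Real.sqrt (θs ⬝ᵥ θs)) := by
  intro v
  set E : Fin d → ℝ := ∑ s ∈ Finset.Icc 1 t, ε s • x s with hE
  set u : Fin d → ℝ := x (t + 1) with hu
  have hvmv : ∀ (a w : Fin d → ℝ), vecMulVec a a *ᵥ w = (a ⬝ᵥ w) • a := by
    intro a w
    funext i
    simp [vecMulVec_apply, mulVec, dotProduct, Finset.mul_sum, mul_comm, mul_left_comm]
  have dot_sum : ∀ {s : Finset ℕ} (f : ℕ → Fin d → ℝ) (w : Fin d → ℝ),
      w ⬝ᵥ (∑ i ∈ s, f i) = ∑ i ∈ s, w ⬝ᵥ f i := by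
    intro s f w
    simp only [dotProduct, Finset.sum_apply, Finset.mul_sum]
    rw [Finset.sum_comm]
  have sum_mv : ∀ {s : Finset ℕ} (M : ℕ → Matrix (Fin d) (Fin d) ℝ) (w : Fin d → ℝ),
      (∑ i ∈ s, M i) *ᵥ w = ∑ i ∈ s, M i *ᵥ w := by
    intro s M w
    funext i
    simp only [mulVec, dotProduct, Matrix.sum_apply, Finset.sum_mul, Finset.sum_apply]
    rw [Finset.sum_comm]
  -- quadratic form of G
  have qf : ∀ w : Fin d → ℝ, w ⬝ᵥ (G *ᵥ w)
      = lam * (w ⬝ᵥ w) + ∑ s ∈ Finset.Icc 1 (t + 1), (x s ⬝ᵥ w) ^ 2 := by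
    intro w
    rw [hG, add_mulVec, dotProduct_add]
    congr 1
    · simp [smul_mulVec, dotProduct_smul, smul_eq_mul]
    · rw [sum_mv, dot_sum]
      refine Finset.sum_congr rfl fun s _ => ?_
      rw [hvmv, dotProduct_smul, smul_eq_mul, dotProduct_comm w (x s), pow_two]
  have dp_nonneg : ∀ w : Fin d → ℝ, 0 ≤ w ⬝ᵥ w := fun w =>
    Finset.sum_nonneg fun i _ => mul_self_nonneg _
  have hGpd : G.PosDef := by
    refine Matrix.PosDef.of_dotProduct_mulVec_pos ?_ ?_
    · show Gᴴ = G
      rw [conjTranspose_eq_transpose_of_trivial, hG, transpose_add, transpose_smul,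
        transpose_one, transpose_sum]
      congr 1
      refine Finset.sum_congr rfl fun s _ => ?_
      ext i j
      simp [vecMulVec_apply, mul_comm]
    · intro w hw
      have hstar : star w = w := rfl
      rw [hstar, qf]
      have h1 : 0 < lam * (w ⬝ᵥ w) := by
        apply mul_pos hlam
        rcases (dp_nonneg w).lt_or_eq with h | h
        · exact h
        · exact absurd (dotProduct_self_eq_zero.mp h.symm) hw
      have h2 : 0 ≤ ∑ s ∈ Finset.Icc 1 (t + 1), (x s ⬝ᵥ w) ^ 2 :=
        Finset.sum_nonneg fun s _ => sq_nonneg _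
      linarith
  have hdet : IsUnit G.det := isUnit_iff_ne_zero.mpr hGpd.det_pos.ne'
  have hAG : G⁻¹ * G = 1 := Matrix.nonsing_inv_mul G hdet
  have hGA : G * G⁻¹ = 1 := Matrix.mul_nonsing_inv G hdet
  set A := G⁻¹ with hA
  have hApsd : A.PosSemidef := hGpd.posSemidef.inv
  -- G applied to inverse recovers
  have hGinv : ∀ z : Fin d → ℝ, G *ᵥ (A *ᵥ z) = z := by
    intro z; rw [mulVec_mulVec, hGA, one_mulVec]
  have hAinv : ∀ z : Fin d → ℝ, A *ᵥ (G *ᵥ z) = z := by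
    intro z; rw [mulVec_mulVec, hAG, one_mulVec]
  -- key decomposition
  have hsplit : Finset.Icc 1 (t + 1) = insert (t + 1) (Finset.Icc 1 t) :=
    (Finset.insert_Icc_right_eq_Icc_add_one (by omega)).symm
  have hmem : (t + 1) ∉ Finset.Icc 1 t := by simp
  set c : ℝ := u ⬝ᵥ θs with hc
  have hdecomp : θf - θs = A *ᵥ (E - lam • θs - c • u) := by
    have hGθf : G *ᵥ θf = ∑ s ∈ Finset.Icc 1 t, y s • x s := by
      rw [hθf]; exact hGinv _
    have hGθs : G *ᵥ θs = lam • θs +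
        ((∑ s ∈ Finset.Icc 1 t, (x s ⬝ᵥ θs) • x s) + c • u) := by
      rw [hG, add_mulVec, sum_mv]
      congr 1
      · simp [smul_mulVec]
      · rw [hsplit, Finset.sum_insert hmem]
        rw [hvmv]
        rw [add_comm]
        congr 1
        exact Finset.sum_congr rfl fun s _ => hvmv _ _
    have hsum : ∑ s ∈ Finset.Icc 1 t, y s • x s
        = (∑ s ∈ Finset.Icc 1 t, (x s ⬝ᵥ θs) • x s) + E := by
      rw [hE, ← Finset.sum_add_distrib]
      exact Finset.sum_congr rfl fun s hs => by rw [hy s hs, add_smul]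
    have hGdiff : G *ᵥ (θf - θs) = E - lam • θs - c • u := by
      rw [Matrix.mulVec_sub, hGθf, hGθs, hsum]
      abel
    rw [← hGdiff, hAinv]
  -- expand
  have hexp : v ⬝ᵥ (θf - θs)
      = v ⬝ᵥ (A *ᵥ E) - lam * (v ⬝ᵥ (A *ᵥ θs)) - c * (v ⬝ᵥ (A *ᵥ u)) := by
    rw [hdecomp, Matrix.mulVec_sub, Matrix.mulVec_sub, dotProduct_sub, dotProduct_sub,
      mulVec_smul, mulVec_smul, dotProduct_smul, dotProduct_smul, smul_eq_mul, smul_eq_mul]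
  have sqv_nonneg : 0 ≤ Real.sqrt (v ⬝ᵥ (A *ᵥ v)) := Real.sqrt_nonneg _
  have sqθ_nonneg : 0 ≤ Real.sqrt (θs ⬝ᵥ θs) := Real.sqrt_nonneg _
  -- bound 1
  have B1 : |v ⬝ᵥ (A *ᵥ E)| ≤ Real.sqrt (v ⬝ᵥ (A *ᵥ v)) * Real.sqrt (E ⬝ᵥ (A *ᵥ E)) :=
    cs_psd hApsd v E
  -- bound 2 : lam * sqrt(θs A θs) ≤ sqrt lam * sqrt(θs θs)
  have B2' : lam * Real.sqrt (θs ⬝ᵥ (A *ᵥ θs)) ≤ Real.sqrt lam * Real.sqrt (θs ⬝ᵥ θs) := by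
    set w : Fin d → ℝ := A *ᵥ θs with hw
    set q : ℝ := θs ⬝ᵥ (A *ᵥ θs) with hq
    have hq0 : 0 ≤ q := hApsd.dotProduct_mulVec_nonneg θs
    have hqw : q = θs ⬝ᵥ w := rfl
    have hGw : G *ᵥ w = θs := hGinv θs
    have hlow : lam * (w ⬝ᵥ w) ≤ q := by
      have := qf w
      rw [hGw] at this
      have h2 : 0 ≤ ∑ s ∈ Finset.Icc 1 (t + 1), (x s ⬝ᵥ w) ^ 2 :=
        Finset.sum_nonneg fun s _ => sq_nonneg _
      have hcm : w ⬝ᵥ θs = q := by rw [hqw, dotProduct_comm]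
      linarith [hcm ▸ this]
    have hcs : q ≤ Real.sqrt (θs ⬝ᵥ θs) * Real.sqrt (w ⬝ᵥ w) := by
      calc q = θs ⬝ᵥ w := hqw
        _ ≤ |θs ⬝ᵥ w| := le_abs_self _
        _ ≤ _ := dot_cs _ _
    -- deduce lam * q ≤ θs ⬝ᵥ θs
    have hkey : lam * q ≤ θs ⬝ᵥ θs := by
      have hq2 : q ^ 2 ≤ (θs ⬝ᵥ θs) * (w ⬝ᵥ w) := by
        have := mul_self_le_mul_self hq0 hcs
        calc q ^ 2 = q * q := sq q
          _ ≤ (Real.sqrt (θs ⬝ᵥ θs) * Real.sqrt (w ⬝ᵥ w)) *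
              (Real.sqrt (θs ⬝ᵥ θs) * Real.sqrt (w ⬝ᵥ w)) := this
          _ = (Real.sqrt (θs ⬝ᵥ θs) * Real.sqrt (θs ⬝ᵥ θs)) *
              (Real.sqrt (w ⬝ᵥ w) * Real.sqrt (w ⬝ᵥ w)) := by ring
          _ = (θs ⬝ᵥ θs) * (w ⬝ᵥ w) := by
              rw [Real.mul_self_sqrt (dp_nonneg _), Real.mul_self_sqrt (dp_nonneg _)]
      rcases hq0.lt_or_eq with hqpos | hqzero
      · have hθθ : 0 ≤ θs ⬝ᵥ θs := dp_nonneg _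
        nlinarith
      · rw [← hqzero]
        simpa using dp_nonneg θs
    calc lam * Real.sqrt q = Real.sqrt (lam ^ 2 * q) := by
          rw [Real.sqrt_mul (sq_nonneg _), Real.sqrt_sq hlam.le]
      _ ≤ Real.sqrt (lam * (θs ⬝ᵥ θs)) := by
          apply Real.sqrt_le_sqrt; nlinarith
      _ = Real.sqrt lam * Real.sqrt (θs ⬝ᵥ θs) := Real.sqrt_mul hlam.le _
  have B2 : lam * |v ⬝ᵥ (A *ᵥ θs)| ≤
      Real.sqrt (v ⬝ᵥ (A *ᵥ v)) * (Real.sqrt lam * Real.sqrt (θs ⬝ᵥ θs)) := by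
    calc lam * |v ⬝ᵥ (A *ᵥ θs)|
        ≤ lam * (Real.sqrt (v ⬝ᵥ (A *ᵥ v)) * Real.sqrt (θs ⬝ᵥ (A *ᵥ θs))) :=
          mul_le_mul_of_nonneg_left (cs_psd hApsd v θs) hlam.le
      _ = Real.sqrt (v ⬝ᵥ (A *ᵥ v)) * (lam * Real.sqrt (θs ⬝ᵥ (A *ᵥ θs))) := by ring
      _ ≤ _ := mul_le_mul_of_nonneg_left B2' sqv_nonneg
  -- bound 3
  have hu1 : Real.sqrt (u ⬝ᵥ (A *ᵥ u)) ≤ 1 := by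
    set w : Fin d → ℝ := A *ᵥ u with hw
    set r : ℝ := u ⬝ᵥ (A *ᵥ u) with hr
    have hr0 : 0 ≤ r := hApsd.dotProduct_mulVec_nonneg u
    have hGw : G *ᵥ w = u := hGinv u
    have hqfw := qf w
    rw [hGw] at hqfw
    have hwu : w ⬝ᵥ u = r := by rw [hr, hw, dotProduct_comm]
    have hterm : (u ⬝ᵥ w) ^ 2 ≤ ∑ s ∈ Finset.Icc 1 (t + 1), (x s ⬝ᵥ w) ^ 2 := by
      have hmem2 : (t + 1) ∈ Finset.Icc 1 (t + 1) := by simp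
      exact Finset.single_le_sum (f := fun s => (x s ⬝ᵥ w) ^ 2) (fun s _ => sq_nonneg _) hmem2
    have huw : u ⬝ᵥ w = r := by rw [← hwu, dotProduct_comm]
    have hr1 : r ≤ 1 := by
      rw [huw] at hterm
      have hww : 0 ≤ w ⬝ᵥ w := dp_nonneg w
      nlinarith [hwu ▸ hqfw]
    calc Real.sqrt r ≤ Real.sqrt 1 := Real.sqrt_le_sqrt hr1
      _ = 1 := Real.sqrt_one
  have hcX : |c| ≤ X * Real.sqrt (θs ⬝ᵥ θs) := by
    calc |c| ≤ Real.sqrt (u ⬝ᵥ u) * Real.sqrt (θs ⬝ᵥ θs) := dot_cs u θs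
      _ ≤ X * Real.sqrt (θs ⬝ᵥ θs) := mul_le_mul_of_nonneg_right hxt1 sqθ_nonneg
  have B3 : |c| * |v ⬝ᵥ (A *ᵥ u)| ≤
      Real.sqrt (v ⬝ᵥ (A *ᵥ v)) * (X * Real.sqrt (θs ⬝ᵥ θs)) := by
    calc |c| * |v ⬝ᵥ (A *ᵥ u)|
        ≤ (X * Real.sqrt (θs ⬝ᵥ θs)) *
          (Real.sqrt (v ⬝ᵥ (A *ᵥ v)) * Real.sqrt (u ⬝ᵥ (A *ᵥ u))) := by
          apply mul_le_mul hcX (cs_psd hApsd v u) (abs_nonneg _)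
          positivity
      _ ≤ (X * Real.sqrt (θs ⬝ᵥ θs)) * (Real.sqrt (v ⬝ᵥ (A *ᵥ v)) * 1) := by
          apply mul_le_mul_of_nonneg_left _ (by positivity)
          exact mul_le_mul_of_nonneg_left hu1 sqv_nonneg
      _ = Real.sqrt (v ⬝ᵥ (A *ᵥ v)) * (X * Real.sqrt (θs ⬝ᵥ θs)) := by ring
  -- combine
  calc |v ⬝ᵥ (θf - θs)|
      ≤ |v ⬝ᵥ (A *ᵥ E)| + lam * |v ⬝ᵥ (A *ᵥ θs)| + |c| * |v ⬝ᵥ (A *ᵥ u)| := by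
        rw [hexp]
        have := abs_sub (v ⬝ᵥ (A *ᵥ E) - lam * (v ⬝ᵥ (A *ᵥ θs))) (c * (v ⬝ᵥ (A *ᵥ u)))
        calc |v ⬝ᵥ (A *ᵥ E) - lam * (v ⬝ᵥ (A *ᵥ θs)) - c * (v ⬝ᵥ (A *ᵥ u))|
            ≤ |v ⬝ᵥ (A *ᵥ E) - lam * (v ⬝ᵥ (A *ᵥ θs))| + |c * (v ⬝ᵥ (A *ᵥ u))| :=
              abs_sub _ _
          _ ≤ |v ⬝ᵥ (A *ᵥ E)| + |lam * (v ⬝ᵥ (A *ᵥ θs))| + |c * (v ⬝ᵥ (A *ᵥ u))| := by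
              have := abs_sub (v ⬝ᵥ (A *ᵥ E)) (lam * (v ⬝ᵥ (A *ᵥ θs)))
              linarith
          _ = |v ⬝ᵥ (A *ᵥ E)| + lam * |v ⬝ᵥ (A *ᵥ θs)| + |c| * |v ⬝ᵥ (A *ᵥ u)| := by
              rw [abs_mul, abs_mul, abs_of_pos hlam]
    _ ≤ Real.sqrt (v ⬝ᵥ (A *ᵥ v)) * Real.sqrt (E ⬝ᵥ (A *ᵥ E))
        + Real.sqrt (v ⬝ᵥ (A *ᵥ v)) * (Real.sqrt lam * Real.sqrt (θs ⬝ᵥ θs))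
        + Real.sqrt (v ⬝ᵥ (A *ᵥ v)) * (X * Real.sqrt (θs ⬝ᵥ θs)) := by
        linarith
    _ = Real.sqrt (v ⬝ᵥ (A *ᵥ v)) *
        (Real.sqrt (E ⬝ᵥ (A *ᵥ E)) + (Real.sqrt lam + X) * Real.sqrt (θs ⬝ᵥ θs)) := by
        ring
end

section
/- (Deterministic regret aggregation for OFUL with forward-algorithm confidence sets.) Let λ > 0, X > 0, S > 0, σ > 0, δ ∈ (0,1), d ≥ 1, and let 𝒳 ⊆ {x ∈ ℝ^d : ‖x‖₂ ≤ X}. Let θ* ∈ ℝ^d with ‖θ*‖₂ ≤ S and let x* ∈ 𝒳 satisfy ⟨x*, θ*⟩ = sup_{x∈𝒳} ⟨x, θ*⟩. Let x₁,…,x_T ∈ 𝒳, G_t := λ I_d + Σ_{s=1}^t x_s x_sᵀ, and √β_t := (√λ + X) S + σ √( 2 log(1/δ) + d log(1 + t X²/(λ d)) ). Suppose that for every 1 ≤ t ≤ T there exist θ̂_{t-1}, θ̃_t ∈ ℝ^d with ‖θ̂_{t-1} − θ*‖_{G_{t-1} + x_t x_tᵀ} ≤ √β_{t-1}, ‖θ̃_t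 − θ̂_{t-1}‖_{G_{t-1} + x_t x_tᵀ} ≤ √β_{t-1}, and ⟨θ̃_t, x_t⟩ ≥ ⟨θ*, x*⟩. Then Σ_{t=1}^T ⟨x* − x_t, θ*⟩ ≤ 4 √( T d log(1 + T X²/(λ d)) ) · ( (√λ + X) S + σ √( 2 log(1/δ) + d log(1 + T X²/(λ d)) ) ). -/
open Matrix Finset


section aux
variable {n : Type*} [Fintype n] [DecidableEq n]

lemma of19_vmv_mulVec (x v : n → ℝ) : vecMulVec x x *ᵥ v = (x ⬝ᵥ v) • x := by
  ext i
  simp [vecMulVec, mulVec, dotProduct, Finset.mul_sum, mul_comm, mul_left_comm]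

lemma of19_vmv_psd (x : n → ℝ) : (vecMulVec x x).PosSemidef := by
  refine Matrix.PosSemidef.of_dotProduct_mulVec_nonneg ?_ ?_
  · ext i j; simp [vecMulVec, conjTranspose, transpose, mul_comm]
  · intro v
    rw [of19_vmv_mulVec]
    simp only [dotProduct_smul, smul_eq_mul, star_trivial]
    rw [show v ⬝ᵥ x = x ⬝ᵥ v from dotProduct_comm _ _]
    exact mul_self_nonneg _

lemma of19_smul_one_posDef {lam : ℝ} (h : 0 < lam) :
    (lam • (1 : Matrix n n ℝ)).PosDef := by
  rw [smul_one_eq_diagonal]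
  exact Matrix.posDef_diagonal_iff.mpr fun _ => h

lemma of19_trace_vmv (x : n → ℝ) : (vecMulVec x x).trace = x ⬝ᵥ x := by
  simp [Matrix.trace, vecMulVec, Matrix.diag, dotProduct]

open scoped MatrixOrder in
lemma of19_cs {H : Matrix n n ℝ} (hH : H.PosDef) (v w : n → ℝ) :
    v ⬝ᵥ w ≤ Real.sqrt (v ⬝ᵥ (H *ᵥ v)) * Real.sqrt (w ⬝ᵥ (H⁻¹ *ᵥ w)) := by
  set R := CFC.sqrt H with hR
  have hRsym : Rᵀ = R := by
    have := (CFC.sqrt_nonneg H).posSemidef.isHermitian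
    rw [hR]; rwa [Matrix.IsHermitian, Matrix.conjTranspose_eq_transpose_of_trivial] at this
  have hRR : R * R = H := by
    have := CFC.sq_sqrt H hH.posSemidef.nonneg; rwa [pow_two] at this
  have hdetR : IsUnit R.det := by
    have hdetH : 0 < H.det := hH.det_pos
    rw [← hRR, det_mul] at hdetH
    exact isUnit_iff_ne_zero.mpr (fun h => by simp [h] at hdetH)
  have hRinvT : (R⁻¹)ᵀ = R⁻¹ := by rw [transpose_nonsing_inv, hRsym]
  set a := R *ᵥ v with ha
  set b := R⁻¹ *ᵥ w with hb
  have hvmul : ∀ u : n → ℝ, u ᵥ* R = R *ᵥ u := by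
    intro u; rw [← hRsym, mulVec_transpose, hRsym]
  have hvmulinv : ∀ u : n → ℝ, u ᵥ* R⁻¹ = R⁻¹ *ᵥ u := by
    intro u; rw [← hRinvT, mulVec_transpose, hRinvT]
  have key1 : v ⬝ᵥ w = a ⬝ᵥ b := by
    rw [ha, hb, dotProduct_mulVec, hvmulinv, mulVec_mulVec, Matrix.nonsing_inv_mul _ hdetR, one_mulVec]
  have key2 : v ⬝ᵥ (H *ᵥ v) = a ⬝ᵥ a := by
    rw [← hRR, ← mulVec_mulVec, dotProduct_mulVec, hvmul]
  have key3 : w ⬝ᵥ (H⁻¹ *ᵥ w) = b ⬝ᵥ b := by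
    rw [← hRR, Matrix.mul_inv_rev, ← mulVec_mulVec, dotProduct_mulVec, hvmulinv]
  rw [key1, key2, key3]
  have hsq : (a ⬝ᵥ b) ^ 2 ≤ (a ⬝ᵥ a) * (b ⬝ᵥ b) := by
    have := Finset.sum_mul_sq_le_sq_mul_sq Finset.univ a b
    simpa [dotProduct, pow_two, mul_comm] using this
  calc a ⬝ᵥ b ≤ |a ⬝ᵥ b| := le_abs_self _
    _ = Real.sqrt ((a ⬝ᵥ b) ^ 2) := (Real.sqrt_sq_eq_abs _).symm
    _ ≤ Real.sqrt ((a ⬝ᵥ a) * (b ⬝ᵥ b)) := Real.sqrt_le_sqrt hsq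
    _ = _ := Real.sqrt_mul (by simpa using dotProduct_self_star_nonneg a) _

lemma of19_det_rank_one {A : Matrix n n ℝ} (hA : A.PosDef) (x : n → ℝ) :
    (A + vecMulVec x x).det = A.det * (1 + x ⬝ᵥ (A⁻¹ *ᵥ x)) := by
  have hdet : IsUnit A.det := isUnit_iff_ne_zero.mpr (ne_of_gt hA.det_pos)
  rw [vecMulVec_eq Unit, det_add_replicateCol_mul_replicateRow hdet]
  congr 1
  rw [det_unique]
  have hsymm : ∀ i j, A⁻¹ i j = A⁻¹ j i := by
    intro i j
    have h := hA.inv.isHermitian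
    conv_lhs => rw [← h]
    simp [conjTranspose_apply]
  simp only [Matrix.add_apply, Matrix.one_apply_eq]
  congr 1
  simp only [Matrix.mul_apply, Matrix.replicateRow_apply, Matrix.replicateCol_apply, dotProduct, mulVec,
    Finset.sum_mul, Finset.mul_sum]
  refine Finset.sum_congr rfl fun j _ => Finset.sum_congr rfl fun i _ => ?_
  rw [hsymm j i]; ring

lemma of19_q_nonneg {A : Matrix n n ℝ} (hA : A.PosDef) (x : n → ℝ) :
    0 ≤ x ⬝ᵥ (A⁻¹ *ᵥ x) := by
  have := hA.inv.posSemidef.dotProduct_mulVec_nonneg x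
  simpa using this

lemma of19_sm {A : Matrix n n ℝ} (hA : A.PosDef) (x : n → ℝ) :
    x ⬝ᵥ ((A + vecMulVec x x)⁻¹ *ᵥ x)
      = (x ⬝ᵥ (A⁻¹ *ᵥ x)) / (1 + x ⬝ᵥ (A⁻¹ *ᵥ x)) := by
  set q := x ⬝ᵥ (A⁻¹ *ᵥ x) with hq
  have hq0 : 0 ≤ q := of19_q_nonneg hA x
  have hq1 : (0:ℝ) < 1 + q := by linarith
  have hAdet : IsUnit A.det := isUnit_iff_ne_zero.mpr (ne_of_gt hA.det_pos)
  set H := A + vecMulVec x x with hH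
  have hHpd : H.PosDef := hA.add_posSemidef (of19_vmv_psd x)
  have hHdet : IsUnit H.det := isUnit_iff_ne_zero.mpr (ne_of_gt hHpd.det_pos)
  set w := (1 + q)⁻¹ • (A⁻¹ *ᵥ x) with hw
  have hHw : H *ᵥ w = x := by
    rw [hw, hH, mulVec_smul, add_mulVec, mulVec_mulVec,
      Matrix.mul_nonsing_inv _ hAdet, one_mulVec, of19_vmv_mulVec, ← hq]
    ext i
    simp only [Pi.smul_apply, Pi.add_apply, smul_eq_mul]
    field_simp
  have : H⁻¹ *ᵥ x = w := by
    rw [← hHw, mulVec_mulVec, Matrix.nonsing_inv_mul _ hHdet, one_mulVec]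
  rw [this, hw]
  simp only [dotProduct_smul, smul_eq_mul, ← hq]
  field_simp

lemma of19_trace_eq_sum_eigen {A : Matrix n n ℝ} (hA : A.IsHermitian) :
    A.trace = ∑ i, hA.eigenvalues i := by
  have h1 : (star (hA.eigenvectorUnitary : Matrix n n ℝ)) * (hA.eigenvectorUnitary : Matrix n n ℝ) = 1 :=
    hA.eigenvectorUnitary.2.1
  conv_lhs => rw [hA.spectral_theorem, Unitary.conjStarAlgAut_apply]
  rw [trace_mul_cycle, h1, one_mul, trace_diagonal]
  simp

lemma of19_det_le_pow {A : Matrix n n ℝ} (hA : A.PosSemidef) (hc : 0 < Fintype.card n) :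
    A.det ≤ (A.trace / Fintype.card n) ^ (Fintype.card n) := by
  set c := Fintype.card n with hcdef
  have hμnn : ∀ i, 0 ≤ hA.isHermitian.eigenvalues i := hA.eigenvalues_nonneg
  have hdet : A.det = ∏ i, hA.isHermitian.eigenvalues i := by
    have := hA.isHermitian.det_eq_prod_eigenvalues
    simpa using this
  have htr : A.trace = ∑ i, hA.isHermitian.eigenvalues i := of19_trace_eq_sum_eigen hA.isHermitian
  have hcne : (c : ℝ) ≠ 0 := Nat.cast_ne_zero.mpr hc.ne'
  have key := Real.geom_mean_le_arith_mean_weighted Finset.univ (fun _ => (c : ℝ)⁻¹)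
    (fun i => hA.isHermitian.eigenvalues i)
    (fun _ _ => by positivity)
    (by simp only [Finset.sum_const, Finset.card_univ, ← hcdef, nsmul_eq_mul]; field_simp)
    (fun i _ => hμnn i)
  have hprod : (∏ i, hA.isHermitian.eigenvalues i ^ ((c : ℝ)⁻¹))
      = (∏ i, hA.isHermitian.eigenvalues i) ^ ((c : ℝ)⁻¹) := by
    rw [← Real.finset_prod_rpow _ _ (fun i _ => hμnn i)]
  rw [hprod] at key
  have hsum : ∑ i, (c : ℝ)⁻¹ * hA.isHermitian.eigenvalues i
      = (∑ i, hA.isHermitian.eigenvalues i) / c := by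
    rw [← Finset.mul_sum]; ring
  rw [hsum] at key
  have hPnn : 0 ≤ ∏ i, hA.isHermitian.eigenvalues i := Finset.prod_nonneg fun i _ => hμnn i
  have h2 := Real.rpow_le_rpow (Real.rpow_nonneg hPnn _) key (Nat.cast_nonneg c)
  rw [← Real.rpow_mul hPnn, inv_mul_cancel₀ hcne, Real.rpow_one,
    Real.rpow_natCast] at h2
  rw [hdet, htr]
  exact h2

lemma of19_ratio_le_log {a : ℝ} (ha : 0 ≤ a) : a / (1 + a) ≤ Real.log (1 + a) := by
  have h1 : (0:ℝ) < 1 + a := by linarith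
  have h2 := Real.log_le_sub_one_of_pos (inv_pos.mpr h1)
  rw [Real.log_inv] at h2
  have h3 : 1 - (1 + a)⁻¹ ≤ Real.log (1 + a) := by linarith
  have h4 : a / (1 + a) = 1 - (1 + a)⁻¹ := by field_simp; ring
  linarith [h3, h4.le, h4.ge]

end aux
theorem stmt_19 {d : ℕ} (hd : 1 ≤ d) (lam X S σ δ : ℝ)
    (hlam : 0 < lam) (hX : 0 < X) (hS : 0 < S) (hσ : 0 < σ)
    (hδ : δ ∈ Set.Ioo (0 : ℝ) 1)
    (𝒳 : Set (Fin d → ℝ)) (h𝒳 : ∀ v ∈ 𝒳, Real.sqrt (v ⬝ᵥ v) ≤ X)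
    (θs : Fin d → ℝ) (hθs : Real.sqrt (θs ⬝ᵥ θs) ≤ S)
    (xstar : Fin d → ℝ) (hxstar : xstar ∈ 𝒳)
    (hopt : ∀ v ∈ 𝒳, v ⬝ᵥ θs ≤ xstar ⬝ᵥ θs)
    (T : ℕ) (x : ℕ → Fin d → ℝ) (hx : ∀ t ∈ Finset.Icc 1 T, x t ∈ 𝒳)
    (G : ℕ → Matrix (Fin d) (Fin d) ℝ)
    (hG : ∀ t, G t = lam • (1 : Matrix (Fin d) (Fin d) ℝ)
      + ∑ s ∈ Finset.Icc 1 t, vecMulVec (x s) (x s))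
    (sβ : ℕ → ℝ)
    (hsβ : ∀ t, sβ t = (Real.sqrt lam + X) * S
      + σ * Real.sqrt (2 * Real.log (1 / δ) + d * Real.log (1 + t * X ^ 2 / (lam * d))))
    (hconf : ∀ t ∈ Finset.Icc 1 T, ∃ θhat θtilde : Fin d → ℝ,
      Real.sqrt ((θhat - θs) ⬝ᵥ
          ((G (t - 1) + vecMulVec (x t) (x t)) *ᵥ (θhat - θs))) ≤ sβ (t - 1) ∧
      Real.sqrt ((θtilde - θhat) ⬝ᵥ
          ((G (t - 1) + vecMulVec (x t) (x t)) *ᵥ (θtilde - θhat))) ≤ sβ (t - 1) ∧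
      xstar ⬝ᵥ θs ≤ θtilde ⬝ᵥ x t) :
    ∑ t ∈ Finset.Icc 1 T, (xstar - x t) ⬝ᵥ θs
      ≤ 4 * Real.sqrt (T * d * Real.log (1 + T * X ^ 2 / (lam * d)))
        * ((Real.sqrt lam + X) * S
          + σ * Real.sqrt (2 * Real.log (1 / δ)
            + d * Real.log (1 + T * X ^ 2 / (lam * d)))) := by
  have hd0 : (0:ℝ) < d := by exact_mod_cast Nat.lt_of_lt_of_le Nat.zero_lt_one hd
  set L : ℝ := Real.log (1 + T * X ^ 2 / (lam * d)) with hL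
  have hLnn : 0 ≤ L := Real.log_nonneg (by
    have : (0:ℝ) ≤ ↑T * X ^ 2 / (lam * ↑d) := by positivity
    linarith)
  -- positivity of G
  have hGpd : ∀ t, (G t).PosDef := by
    intro t
    rw [hG]
    exact (of19_smul_one_posDef hlam).add_posSemidef
      (Finset.sum_induction _ _ (fun a b ha hb => ha.add hb) Matrix.PosSemidef.zero
        (fun i _ => of19_vmv_psd (x i)))
  -- G step
  have hGstep : ∀ t ∈ Finset.Icc 1 T, G (t - 1) + vecMulVec (x t) (x t) = G t := by
    intro t ht
    obtain ⟨ht1, _⟩ := Finset.mem_Icc.mp ht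
    obtain ⟨s, rfl⟩ : ∃ s, t = s + 1 := ⟨t - 1, (Nat.succ_pred_eq_of_pos ht1).symm⟩
    simp only [Nat.add_sub_cancel]
    rw [hG, hG, Finset.sum_Icc_succ_top (Nat.succ_le_succ (Nat.zero_le s)), ← add_assoc]
  -- nonnegativity of the q's
  set q : ℕ → ℝ := fun t => x t ⬝ᵥ ((G t)⁻¹ *ᵥ x t) with hqdef
  have hqnn : ∀ t, 0 ≤ q t := fun t => of19_q_nonneg (hGpd t) (x t)
  have hsβT : sβ T = (Real.sqrt lam + X) * S
      + σ * Real.sqrt (2 * Real.log (1 / δ) + d * L) := hsβ T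
  have hsβTnn : 0 ≤ sβ T := by
    rw [hsβT]
    have : (0:ℝ) ≤ Real.sqrt lam + X := by positivity
    positivity
  -- monotonicity of sβ
  have hsβmono : ∀ s : ℕ, s ≤ T → sβ s ≤ sβ T := by
    intro s hsT
    rw [hsβ s, hsβ T]
    have harg : (1 : ℝ) + s * X ^ 2 / (lam * d) ≤ 1 + T * X ^ 2 / (lam * d) := by
      have : (s:ℝ) ≤ T := by exact_mod_cast hsT
      have h1 : (s:ℝ) * X ^ 2 ≤ T * X ^ 2 := by nlinarith
      have h2 : 0 < lam * d := by positivity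
      gcongr
    have hlog : Real.log (1 + s * X ^ 2 / (lam * d)) ≤ L := by
      rw [hL]
      exact Real.log_le_log (by positivity) harg
    gcongr
  -- per-round regret bound
  have hstep : ∀ t ∈ Finset.Icc 1 T,
      (xstar - x t) ⬝ᵥ θs ≤ 2 * sβ T * Real.sqrt (q t) := by
    intro t ht
    obtain ⟨θhat, θtilde, h1, h2, h3⟩ := hconf t ht
    rw [hGstep t ht] at h1 h2
    have hcs1 : (θhat - θs) ⬝ᵥ x t ≤ sβ (t-1) * Real.sqrt (q t) :=
      le_trans (of19_cs (hGpd t) _ (x t))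
        (mul_le_mul_of_nonneg_right h1 (Real.sqrt_nonneg _))
    have hcs2 : (θtilde - θhat) ⬝ᵥ x t ≤ sβ (t-1) * Real.sqrt (q t) :=
      le_trans (of19_cs (hGpd t) _ (x t))
        (mul_le_mul_of_nonneg_right h2 (Real.sqrt_nonneg _))
    have e1 : (xstar - x t) ⬝ᵥ θs = xstar ⬝ᵥ θs - x t ⬝ᵥ θs := sub_dotProduct _ _ _
    have e2 : (θtilde - θs) ⬝ᵥ x t = θtilde ⬝ᵥ x t - θs ⬝ᵥ x t := sub_dotProduct _ _ _
    have e3 : x t ⬝ᵥ θs = θs ⬝ᵥ x t := dotProduct_comm _ _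
    have hsplit : (θtilde - θs) ⬝ᵥ x t = (θtilde - θhat) ⬝ᵥ x t + (θhat - θs) ⬝ᵥ x t := by
      rw [← add_dotProduct]
      congr 1
      abel
    have hβ : sβ (t-1) ≤ sβ T := hsβmono _ (le_trans (Nat.sub_le t 1) (Finset.mem_Icc.mp ht).2)
    have hmul := mul_le_mul_of_nonneg_right hβ (Real.sqrt_nonneg (q t))
    linarith
  have hsum1 : ∑ t ∈ Finset.Icc 1 T, (xstar - x t) ⬝ᵥ θs
      ≤ 2 * sβ T * ∑ t ∈ Finset.Icc 1 T, Real.sqrt (q t) := by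
    rw [Finset.mul_sum]
    exact Finset.sum_le_sum hstep
  have hCS : ∑ t ∈ Finset.Icc 1 T, Real.sqrt (q t)
      ≤ Real.sqrt T * Real.sqrt (∑ t ∈ Finset.Icc 1 T, q t) := by
    have h := Finset.sum_mul_sq_le_sq_mul_sq (Finset.Icc 1 T)
      (fun _ => (1:ℝ)) (fun t => Real.sqrt (q t))
    simp only [one_mul, one_pow] at h
    have hcard : ∑ _t ∈ Finset.Icc 1 T, (1:ℝ) = T := by
      simp [Nat.card_Icc]
    have hsq : ∀ t ∈ Finset.Icc 1 T, Real.sqrt (q t) ^ 2 = q t :=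
      fun t _ => Real.sq_sqrt (hqnn t)
    rw [hcard, Finset.sum_congr rfl hsq] at h
    have hnn : 0 ≤ ∑ t ∈ Finset.Icc 1 T, Real.sqrt (q t) :=
      Finset.sum_nonneg fun t _ => Real.sqrt_nonneg _
    calc ∑ t ∈ Finset.Icc 1 T, Real.sqrt (q t)
        = Real.sqrt ((∑ t ∈ Finset.Icc 1 T, Real.sqrt (q t)) ^ 2) := (Real.sqrt_sq hnn).symm
      _ ≤ Real.sqrt (T * ∑ t ∈ Finset.Icc 1 T, q t) := Real.sqrt_le_sqrt h
      _ = Real.sqrt T * Real.sqrt (∑ t ∈ Finset.Icc 1 T, q t) :=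
          Real.sqrt_mul (Nat.cast_nonneg T) _
  -- elliptical potential
  have hpot : ∑ t ∈ Finset.Icc 1 T, q t ≤ d * L := by
    have hpt : ∀ t ∈ Finset.Icc 1 T,
        q t ≤ Real.log ((G t).det) - Real.log ((G (t-1)).det) := by
      intro t ht
      have hA := hGpd (t-1)
      set q' := x t ⬝ᵥ ((G (t-1))⁻¹ *ᵥ x t) with hq'
      have hq'nn : 0 ≤ q' := of19_q_nonneg hA (x t)
      have h1 : q t = q' / (1 + q') := by
        rw [hqdef]
        dsimp only
        rw [← hGstep t ht, of19_sm hA]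
      have hdet : (G t).det = (G (t-1)).det * (1 + q') := by
        rw [← hGstep t ht, of19_det_rank_one hA]
      have hd1 : 0 < (G (t-1)).det := hA.det_pos
      have hd2 : (0:ℝ) < 1 + q' := by linarith
      rw [h1, hdet, Real.log_mul (ne_of_gt hd1) (ne_of_gt hd2)]
      have := of19_ratio_le_log hq'nn
      linarith
    have htel : ∑ t ∈ Finset.Icc 1 T,
        (Real.log ((G t).det) - Real.log ((G (t-1)).det))
        = Real.log ((G T).det) - Real.log ((G 0).det) := by
      rw [← Finset.Ico_add_one_right_eq_Icc, Finset.sum_Ico_eq_sum_range]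
      rw [← Finset.sum_range_sub (fun i => Real.log ((G i).det)) T]
      simp only [Nat.add_sub_cancel]
      refine Finset.sum_congr rfl fun i _ => ?_
      rw [Nat.add_comm 1 i, Nat.add_sub_cancel]
    have hdet0 : (G 0).det = lam ^ d := by
      rw [hG 0, Finset.Icc_eq_empty (by omega), Finset.sum_empty, add_zero,
        det_smul, det_one, mul_one, Fintype.card_fin]
    have htr : (G T).trace ≤ lam * d + T * X ^ 2 := by
      rw [hG T, trace_add, trace_smul, trace_one, trace_sum]
      simp only [of19_trace_vmv, Fintype.card_fin, smul_eq_mul]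
      have hbd : ∀ s ∈ Finset.Icc 1 T, x s ⬝ᵥ x s ≤ X ^ 2 := by
        intro s hs
        have h1 := h𝒳 _ (hx s hs)
        have h2 : 0 ≤ x s ⬝ᵥ x s := by simpa using dotProduct_self_star_nonneg (x s)
        nlinarith [Real.sq_sqrt h2, Real.sqrt_nonneg (x s ⬝ᵥ x s)]
      have h3 : ∑ s ∈ Finset.Icc 1 T, x s ⬝ᵥ x s ≤ T * X ^ 2 := by
        calc ∑ s ∈ Finset.Icc 1 T, x s ⬝ᵥ x s
            ≤ ∑ _s ∈ Finset.Icc 1 T, X ^ 2 := Finset.sum_le_sum hbd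
          _ = T * X ^ 2 := by simp [Nat.card_Icc]
      linarith
    have htrnn : 0 ≤ (G T).trace := by
      rw [of19_trace_eq_sum_eigen (hGpd T).posSemidef.isHermitian]
      exact Finset.sum_nonneg fun i _ => (hGpd T).posSemidef.eigenvalues_nonneg i
    have hdetT : (G T).det ≤ (lam + T * X ^ 2 / d) ^ d := by
      have h1 := of19_det_le_pow (hGpd T).posSemidef
        (by rw [Fintype.card_fin]; omega)
      rw [Fintype.card_fin] at h1
      refine le_trans h1 (pow_le_pow_left₀ (div_nonneg htrnn hd0.le) ?_ d)
      rw [div_le_iff₀ hd0]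
      have he : (lam + T * X ^ 2 / d) * d = lam * d + T * X ^ 2 := by
        field_simp
      linarith
    have hlogT : Real.log ((G T).det) ≤ d * Real.log (lam + T * X ^ 2 / d) := by
      calc Real.log ((G T).det)
          ≤ Real.log ((lam + T * X ^ 2 / d) ^ d) := Real.log_le_log (hGpd T).det_pos hdetT
        _ = d * Real.log (lam + T * X ^ 2 / d) := by rw [Real.log_pow]
    have hlog0 : Real.log ((G 0).det) = d * Real.log lam := by
      rw [hdet0, Real.log_pow]
    have harg : Real.log (lam + T * X ^ 2 / d) - Real.log lam = L := by
      have he : (lam + T * X ^ 2 / d) / lam = 1 + T * X ^ 2 / (lam * d) := by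
        rw [add_div, div_self (ne_of_gt hlam), div_div, mul_comm (d:ℝ) lam]
      rw [hL, ← Real.log_div (by positivity) (ne_of_gt hlam), he]
    have hdL : (d:ℝ) * Real.log (lam + T * X ^ 2 / d) - d * Real.log lam = d * L := by
      rw [← harg]
      ring
    calc ∑ t ∈ Finset.Icc 1 T, q t
        ≤ ∑ t ∈ Finset.Icc 1 T, (Real.log ((G t).det) - Real.log ((G (t-1)).det)) :=
          Finset.sum_le_sum hpt
      _ = Real.log ((G T).det) - Real.log ((G 0).det) := htel
      _ ≤ d * L := by rw [hlog0]; linarith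
  -- combine
  have hqsumnn : 0 ≤ ∑ t ∈ Finset.Icc 1 T, q t := Finset.sum_nonneg fun t _ => hqnn t
  have h2nn : (0:ℝ) ≤ 2 * sβ T := by linarith
  calc ∑ t ∈ Finset.Icc 1 T, (xstar - x t) ⬝ᵥ θs
      ≤ 2 * sβ T * ∑ t ∈ Finset.Icc 1 T, Real.sqrt (q t) := hsum1
    _ ≤ 2 * sβ T * (Real.sqrt T * Real.sqrt (∑ t ∈ Finset.Icc 1 T, q t)) :=
        mul_le_mul_of_nonneg_left hCS h2nn
    _ ≤ 2 * sβ T * (Real.sqrt T * Real.sqrt (d * L)) := by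
        have hs : Real.sqrt (∑ t ∈ Finset.Icc 1 T, q t) ≤ Real.sqrt (d * L) :=
          Real.sqrt_le_sqrt hpot
        exact mul_le_mul_of_nonneg_left
          (mul_le_mul_of_nonneg_left hs (Real.sqrt_nonneg _)) h2nn
    _ = 2 * sβ T * Real.sqrt (T * d * L) := by
        rw [← Real.sqrt_mul (Nat.cast_nonneg T), mul_assoc ((T:ℝ)) (d:ℝ) L]
    _ ≤ 4 * Real.sqrt (T * d * L) * sβ T := by
        nlinarith [Real.sqrt_nonneg ((T:ℝ) * d * L), hsβTnn,
          mul_nonneg (Real.sqrt_nonneg ((T:ℝ) * d * L)) hsβTnn]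
    _ = 4 * Real.sqrt (T * d * L)
        * ((Real.sqrt lam + X) * S
          + σ * Real.sqrt (2 * Real.log (1 / δ) + d * L)) := by rw [hsβT]
end
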